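/- arXiv:0908.2782 — 9 statements merged into one kernel-verified Lean document; each statement's English description precedes it below -/
import Mathlib

section
/- Let x ∈ {0,1}^N be a solution of an EC3 instance (f(x) = 0), let i ∈ Fin N, and let y be the assignment obtained from x by flipping bit i (y_i = 1 − x_i and y_j = x_j for j ≠ i). Then f(y) = B_i, the number of clauses containing bit i. -/
/-- The EC3 cost function: `f(x) = ∑_c ((∑_{i ∈ C c} x_i) − 1)²`. -/
def ec3Cost {N M : ℕ} (C : Fin M → {s : Finset (Fin N) // s.card = 3})
    (x : Fin N → Bool) : ℤ :=
  ∑ c : Fin M, ((∑ i ∈ (C c).1, (if x i then 1 else 0 : ℤ)) - 1) ^ 2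

/-- `B_i`: the number of clauses containing bit `i`. -/
def ec3B {N M : ℕ} (C : Fin M → {s : Finset (Fin N) // s.card = 3}) (i : Fin N) : ℕ :=
  (Finset.univ.filter (fun c : Fin M => i ∈ (C c).1)).card

/-- If `x` is a solution of an EC3 instance (`f(x) = 0`) and `y` is obtained
from `x` by flipping bit `i`, then `f(y) = B_i`. -/
theorem stmt_7 (N M : ℕ) (C : Fin M → {s : Finset (Fin N) // s.card = 3})
    (x : Fin N → Bool) (hx : ec3Cost C x = 0) (i : Fin N)
    (y : Fin N → Bool) (hy : y = Function.update x i (! x i)) :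
    ec3Cost C y = (ec3B C i : ℤ) := by
  subst hy
  have hterm : ∀ c : Fin M, (∑ j ∈ (C c).1, (if x j then 1 else 0 : ℤ)) = 1 := by
    intro c
    have h0 : ∀ c ∈ Finset.univ,
        (0:ℤ) ≤ ((∑ j ∈ (C c).1, (if x j then 1 else 0 : ℤ)) - 1) ^ 2 :=
      fun c _ => sq_nonneg _
    have h1 := (Finset.sum_eq_zero_iff_of_nonneg h0).mp hx c (Finset.mem_univ c)
    have h2 := pow_eq_zero_iff (two_ne_zero) |>.mp h1
    linarith
  have key : ∀ c : Fin M,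
      ((∑ j ∈ (C c).1, (if Function.update x i (! x i) j then 1 else 0 : ℤ)) - 1) ^ 2
        = if i ∈ (C c).1 then 1 else 0 := by
    intro c
    by_cases hi : i ∈ (C c).1
    · simp only [hi, if_true]
      have hx' := hterm c
      rw [← Finset.add_sum_erase _ _ hi] at hx' ⊢
      have heq : (∑ j ∈ (C c).1.erase i,
          (if Function.update x i (! x i) j then 1 else 0 : ℤ))
          = ∑ j ∈ (C c).1.erase i, (if x j then 1 else 0 : ℤ) := by
        refine Finset.sum_congr rfl fun j hj => ?_
        rw [Function.update_of_ne (Finset.ne_of_mem_erase hj)]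
      rw [heq]
      rw [Function.update_self]
      set R := ∑ j ∈ (C c).1.erase i, (if x j then 1 else 0 : ℤ) with hR
      cases hxi : x i
      · norm_num [hxi] at hx' ⊢
        omega
      · norm_num [hxi] at hx' ⊢
        omega
    · simp only [hi, if_false]
      have heq : (∑ j ∈ (C c).1,
          (if Function.update x i (! x i) j then 1 else 0 : ℤ))
          = ∑ j ∈ (C c).1, (if x j then 1 else 0 : ℤ) := by
        refine Finset.sum_congr rfl fun j hj => ?_
        rw [Function.update_of_ne (by rintro rfl; exact hi hj)]
      rw [heq, hterm c]
      ring
  rw [ec3Cost, Finset.sum_congr rfl (fun c _ => key c), Finset.sum_boole, ec3B]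
end

section
/- Let x ∈ {0,1}^N be a solution of an EC3 instance (f(x) = 0), and let i ≠ j be two bits that never appear together in a clause (J_{ij} = 0). Let y be the assignment obtained from x by flipping both bits i and j. Then f(y) = B_i + B_j. -/
/-- `J_{ij}`: the number of clauses containing both bits `i` and `j`. -/
def ec3J {N M : ℕ} (C : Fin M → {s : Finset (Fin N) // s.card = 3}) (i j : Fin N) : ℕ :=
  (Finset.univ.filter (fun c : Fin M => i ∈ (C c).1 ∧ j ∈ (C c).1)).card

lemma sum_ite_update {N : ℕ} (f : Fin N → Bool) (a : Fin N) (b : Bool) (s : Finset (Fin N)) :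
    ∑ k ∈ s, (if Function.update f a b k then (1:ℤ) else 0) =
    (∑ k ∈ s, (if f k then (1:ℤ) else 0)) +
      (if a ∈ s then (if b then (1:ℤ) else 0) - (if f a then 1 else 0) else 0) := by
  by_cases h : a ∈ s
  · rw [← Finset.add_sum_erase s _ h,
      ← Finset.add_sum_erase s (fun k => if f k then (1:ℤ) else 0) h]
    have he : ∑ k ∈ s.erase a, (if Function.update f a b k then (1:ℤ) else 0)
        = ∑ k ∈ s.erase a, (if f k then (1:ℤ) else 0) :=
      Finset.sum_congr rfl fun k hk => by
        rw [Function.update_of_ne (Finset.ne_of_mem_erase hk)]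
    rw [he, Function.update_self, if_pos h]
    ring
  · rw [if_neg h, add_zero]
    exact Finset.sum_congr rfl fun k hk => by
      rw [Function.update_of_ne (by rintro rfl; exact h hk)]

/-- If `x` is a solution of an EC3 instance (`f(x) = 0`), `i ≠ j` never appear
together in a clause (`J_{ij} = 0`), and `y` is obtained from `x` by flipping both bits `i`
and `j`, then `f(y) = B_i + B_j`. -/
theorem stmt_8 (N M : ℕ) (C : Fin M → {s : Finset (Fin N) // s.card = 3})
    (x : Fin N → Bool) (hx : ec3Cost C x = 0) (i j : Fin N) (hij : i ≠ j)
    (hJ : ec3J C i j = 0)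
    (y : Fin N → Bool)
    (hy : y = Function.update (Function.update x i (! x i)) j (! x j)) :
    ec3Cost C y = (ec3B C i : ℤ) + (ec3B C j : ℤ) := by
  have hsol : ∀ c : Fin M, ∑ k ∈ (C c).1, (if x k then (1:ℤ) else 0) = 1 := by
    intro c
    have h0 := (Finset.sum_eq_zero_iff_of_nonneg
      (fun c _ => sq_nonneg ((∑ i ∈ (C c).1, (if x i then 1 else 0 : ℤ)) - 1))).mp hx c
      (Finset.mem_univ c)
    have h1 : (∑ k ∈ (C c).1, (if x k then (1:ℤ) else 0)) - 1 = 0 :=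
      pow_eq_zero_iff (two_ne_zero) |>.mp h0
    linarith
  have hnot : ∀ c : Fin M, ¬(i ∈ (C c).1 ∧ j ∈ (C c).1) := by
    intro c hc
    rw [ec3J, Finset.card_eq_zero] at hJ
    have : c ∈ Finset.univ.filter (fun c : Fin M => i ∈ (C c).1 ∧ j ∈ (C c).1) :=
      Finset.mem_filter.mpr ⟨Finset.mem_univ c, hc⟩
    rw [hJ] at this
    exact absurd this (Finset.notMem_empty c)
  have key : ∀ c : Fin M, ((∑ k ∈ (C c).1, (if y k then (1:ℤ) else 0)) - 1) ^ 2
      = (if i ∈ (C c).1 then (1:ℤ) else 0) + (if j ∈ (C c).1 then (1:ℤ) else 0) := by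
    intro c
    subst hy
    rw [sum_ite_update, sum_ite_update, hsol c, Function.update_of_ne hij.symm]
    by_cases hi : i ∈ (C c).1 <;> by_cases hj : j ∈ (C c).1
    · exact absurd ⟨hi, hj⟩ (hnot c)
    · simp only [if_pos hi, if_neg hj, add_zero]
      cases x i <;> norm_num
    · simp only [if_neg hi, if_pos hj, add_zero, zero_add]
      cases x j <;> norm_num
    · simp only [if_neg hi, if_neg hj, add_zero]
      norm_num
  rw [ec3Cost]
  calc ∑ c : Fin M, ((∑ k ∈ (C c).1, (if y k then (1:ℤ) else 0)) - 1) ^ 2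
      = ∑ c : Fin M, ((if i ∈ (C c).1 then (1:ℤ) else 0) + (if j ∈ (C c).1 then (1:ℤ) else 0)) :=
        Finset.sum_congr rfl fun c _ => key c
    _ = (ec3B C i : ℤ) + (ec3B C j : ℤ) := by
        rw [Finset.sum_add_distrib, Finset.sum_boole, Finset.sum_boole, ec3B, ec3B]
end

section
/- Let x ∈ {0,1}^N be a solution of an EC3 instance (f(x) = 0) in which every bit appears in at least one clause (B_i ≥ 1 for all i). Then the second-order perturbation sum over single-bit flips satisfies ∑_{y : d_H(x,y)=1} 1/(f(x) − f(y)) = − ∑_{i=1}^{N} 1/B_i, where d_H denotes Hamming distance. -/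
open scoped Classical

lemma clause_sum {N M : ℕ} (C : Fin M → {s : Finset (Fin N) // s.card = 3})
    (x : Fin N → Bool) (hx : ec3Cost C x = 0) (c : Fin M) :
    (∑ i ∈ (C c).1, (if x i then 1 else 0 : ℤ)) = 1 := by
  have h := (Finset.sum_eq_zero_iff_of_nonneg (fun c _ => sq_nonneg _)).mp hx c (Finset.mem_univ c)
  have h2 := pow_eq_zero_iff (n := 2) (by norm_num) |>.mp h
  linarith

lemma flip_cost {N M : ℕ} (C : Fin M → {s : Finset (Fin N) // s.card = 3})
    (x : Fin N → Bool) (hx : ec3Cost C x = 0) (j : Fin N) :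
    ec3Cost C (Function.update x j (!x j)) = (ec3B C j : ℤ) := by
  unfold ec3Cost ec3B
  rw [Finset.card_filter]
  push_cast
  apply Finset.sum_congr rfl
  intro c _
  by_cases hj : j ∈ (C c).1
  · have hsplit : (∑ i ∈ (C c).1, (if Function.update x j (!x j) i then 1 else 0 : ℤ))
        = (∑ i ∈ (C c).1.erase j, (if x i then 1 else 0 : ℤ))
          + (if !x j then 1 else 0 : ℤ) := by
      rw [← Finset.add_sum_erase _ _ hj, Function.update_self, add_comm]
      congr 1
      apply Finset.sum_congr rfl
      intro i hi
      rw [Function.update_of_ne (Finset.ne_of_mem_erase hi)]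
    have hold : (∑ i ∈ (C c).1.erase j, (if x i then 1 else 0 : ℤ))
        = 1 - (if x j then 1 else 0 : ℤ) := by
      have := clause_sum C x hx c
      rw [← Finset.add_sum_erase _ _ hj] at this
      linarith
    rw [hsplit, hold, if_pos hj]
    cases hxj : x j <;> simp [hxj]
  · have : (∑ i ∈ (C c).1, (if Function.update x j (!x j) i then 1 else 0 : ℤ))
        = (∑ i ∈ (C c).1, (if x i then 1 else 0 : ℤ)) := by
      apply Finset.sum_congr rfl
      intro i hi
      rw [Function.update_of_ne (by rintro rfl; exact hj hi)]
    rw [this, clause_sum C x hx c, if_neg hj]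
    ring

lemma flip_dist {N : ℕ} (x : Fin N → Bool) (i : Fin N) :
    hammingDist x (Function.update x i (!x i)) = 1 := by
  unfold hammingDist
  rw [Finset.card_eq_one]
  refine ⟨i, ?_⟩
  ext j
  simp only [Finset.mem_filter, Finset.mem_univ, true_and, Finset.mem_singleton]
  constructor
  · intro hj
    by_contra hne
    exact hj (by rw [Function.update_of_ne hne])
  · rintro rfl
    rw [Function.update_self]
    exact fun h => Bool.not_ne_self _ h.symm

/-- If `x` is a solution of an EC3 instance (`f(x) = 0`) in which every bit
appears in at least one clause (`B_i ≥ 1` for all `i`), then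
`∑_{y : d_H(x,y)=1} 1/(f(x) − f(y)) = − ∑_i 1/B_i`. -/
theorem stmt_9 (N M : ℕ) (C : Fin M → {s : Finset (Fin N) // s.card = 3})
    (x : Fin N → Bool) (hx : ec3Cost C x = 0) (hB : ∀ i : Fin N, 1 ≤ ec3B C i) :
    ∑ y ∈ Finset.univ.filter (fun y : Fin N → Bool => hammingDist x y = 1),
        (1 : ℝ) / ((ec3Cost C x : ℝ) - (ec3Cost C y : ℝ))
    = - ∑ i : Fin N, (1 : ℝ) / (ec3B C i : ℝ) := by
  have himg : Finset.univ.filter (fun y : Fin N → Bool => hammingDist x y = 1)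
      = Finset.univ.image (fun i : Fin N => Function.update x i (!x i)) := by
    ext y
    simp only [Finset.mem_filter, Finset.mem_image, Finset.mem_univ, true_and]
    constructor
    · intro hy
      unfold hammingDist at hy
      obtain ⟨i, hi⟩ := Finset.card_eq_one.mp hy
      refine ⟨i, ?_⟩
      funext j
      by_cases hj : j = i
      · subst hj
        rw [Function.update_self]
        have : j ∈ Finset.univ.filter (fun k => x k ≠ y k) := by
          rw [hi]; exact Finset.mem_singleton_self j
        simp only [Finset.mem_filter, Finset.mem_univ, true_and] at this
        cases hxj : x j <;> cases hyj : y j <;> simp_all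
      · rw [Function.update_of_ne hj]
        have : j ∉ Finset.univ.filter (fun k => x k ≠ y k) := by
          rw [hi]; simpa using hj
        simp only [Finset.mem_filter, Finset.mem_univ, true_and] at this
        exact not_ne_iff.mp this
    · rintro ⟨i, rfl⟩
      exact flip_dist x i
  have hinj : ∀ i j : Fin N, Function.update x i (!x i) = Function.update x j (!x j) → i = j := by
    intro i j h
    by_contra hne
    have := congrFun h i
    rw [Function.update_self, Function.update_of_ne hne] at this
    exact Bool.not_ne_self _ this
  rw [himg, Finset.sum_image (fun i _ j _ h => hinj i j h)]
  rw [← Finset.sum_neg_distrib]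
  apply Finset.sum_congr rfl
  intro i _
  rw [flip_cost C x hx i, hx]
  push_cast
  rw [zero_sub, div_neg]
end

section
/- Let x¹ and x² be two solutions of an EC3 instance in which every bit appears in at least one clause (B_i ≥ 1 for all i). Then the second-order corrections to their energies coincide: ∑_{y : d_H(x¹,y)=1} 1/(f(x¹) − f(y)) = ∑_{y : d_H(x²,y)=1} 1/(f(x²) − f(y)) (both sides equal −∑_i 1/B_i, so the second-order splitting E_{12}^{(2)} vanishes). -/
open scoped Classical

lemma ec3_clause_sum {N M : ℕ} (C : Fin M → {s : Finset (Fin N) // s.card = 3})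
    (x : Fin N → Bool) (hx : ec3Cost C x = 0) (c : Fin M) :
    ∑ i ∈ (C c).1, (if x i then 1 else 0 : ℤ) = 1 := by
  have h := (Finset.sum_eq_zero_iff_of_nonneg (fun c _ => sq_nonneg _)).mp hx c
    (Finset.mem_univ c)
  have := pow_eq_zero_iff (n := 2) (by norm_num) |>.mp h
  linarith [this]

lemma ec3_flip_cost {N M : ℕ} (C : Fin M → {s : Finset (Fin N) // s.card = 3})
    (x : Fin N → Bool) (hx : ec3Cost C x = 0) (i : Fin N) :
    ec3Cost C (Function.update x i (!(x i))) = (ec3B C i : ℤ) := by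
  unfold ec3Cost ec3B
  rw [Finset.card_filter]
  push_cast
  refine Finset.sum_congr rfl fun c _ => ?_
  by_cases hi : i ∈ (C c).1
  · simp only [hi, if_true]
    have hsplit : ∑ j ∈ (C c).1, (if Function.update x i (!(x i)) j then 1 else 0 : ℤ)
        = (if !(x i) then 1 else 0 : ℤ)
          + ∑ j ∈ (C c).1 \ {i}, (if x j then 1 else 0 : ℤ) := by
      rw [Finset.sum_eq_add_sum_sdiff_singleton_of_mem hi
        (fun j => (if Function.update x i (!(x i)) j then 1 else 0 : ℤ))]
      congr 1
      · simp
      · refine Finset.sum_congr rfl fun j hj => ?_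
        rcases Finset.mem_sdiff.mp hj with ⟨_, hj2⟩
        rw [Function.update_of_ne (by simpa using hj2)]
    have hsplit2 : ∑ j ∈ (C c).1, (if x j then 1 else 0 : ℤ)
        = (if x i then 1 else 0 : ℤ) + ∑ j ∈ (C c).1 \ {i}, (if x j then 1 else 0 : ℤ) :=
      Finset.sum_eq_add_sum_sdiff_singleton_of_mem hi _
    have hclause := ec3_clause_sum C x hx c
    rw [hsplit]
    rw [hsplit2] at hclause
    set s : ℤ := ∑ j ∈ (C c).1 \ {i}, (if x j then 1 else 0 : ℤ) with hs
    cases h : x i <;> simp only [h] at hclause <;> norm_num at hclause ⊢ <;> omega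
  · have : ∑ j ∈ (C c).1, (if Function.update x i (!(x i)) j then 1 else 0 : ℤ)
        = ∑ j ∈ (C c).1, (if x j then 1 else 0 : ℤ) := by
      refine Finset.sum_congr rfl fun j hj => ?_
      rw [Function.update_of_ne (by rintro rfl; exact hi hj)]
    rw [this, ec3_clause_sum C x hx c]
    simp [hi]

lemma ec3_flip_inj {N : ℕ} (x : Fin N → Bool) :
    Function.Injective (fun i => Function.update x i (!(x i))) := by
  intro i j h
  by_contra hij
  have h1 : Function.update x i (!(x i)) i = Function.update x j (!(x j)) i := congrFun h i
  rw [Function.update_self, Function.update_of_ne hij] at h1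
  exact (Bool.not_ne_self (x i)) h1

lemma ec3_filter_eq {N : ℕ} (x : Fin N → Bool) :
    Finset.univ.filter (fun y : Fin N → Bool => hammingDist x y = 1)
      = Finset.image (fun i => Function.update x i (!(x i))) Finset.univ := by
  ext y
  simp only [Finset.mem_filter, Finset.mem_univ, true_and, Finset.mem_image]
  constructor
  · intro hy
    have hcard : (Finset.univ.filter (fun i => x i ≠ y i)).card = 1 := hy
    rcases Finset.card_eq_one.mp hcard with ⟨i, hi⟩
    refine ⟨i, ?_⟩
    funext j
    by_cases hj : j = i
    · subst hj
      have hne : x j ≠ y j := by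
        have : j ∈ Finset.univ.filter (fun i => x i ≠ y i) := hi ▸ Finset.mem_singleton_self j
        simpa using this
      rw [Function.update_self]
      cases h : x j <;> cases h2 : y j <;> simp_all
    · rw [Function.update_of_ne hj]
      by_contra hne
      have : j ∈ Finset.univ.filter (fun i => x i ≠ y i) := by simpa using hne
      rw [hi] at this
      exact hj (Finset.mem_singleton.mp this)
  · rintro ⟨i, rfl⟩
    show (Finset.univ.filter _).card = 1
    rw [Finset.card_eq_one]
    refine ⟨i, ?_⟩
    ext j
    simp only [Finset.mem_filter, Finset.mem_univ, true_and, Finset.mem_singleton]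
    by_cases hj : j = i
    · subst hj; simp [Function.update_self]
    · simp [Function.update_of_ne hj, hj]

lemma ec3_sum_eq {N M : ℕ} (C : Fin M → {s : Finset (Fin N) // s.card = 3})
    (x : Fin N → Bool) (hx : ec3Cost C x = 0) :
    ∑ y ∈ Finset.univ.filter (fun y : Fin N → Bool => hammingDist x y = 1),
        (1 : ℝ) / ((ec3Cost C x : ℝ) - (ec3Cost C y : ℝ))
      = ∑ i : Fin N, (1 : ℝ) / (0 - (ec3B C i : ℝ)) := by
  rw [ec3_filter_eq, Finset.sum_image (fun i _ j _ h => ec3_flip_inj x h)]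
  refine Finset.sum_congr rfl fun i _ => ?_
  rw [hx, ec3_flip_cost C x hx i]
  norm_num

/-- If `x¹` and `x²` are two solutions of an EC3 instance in which every bit
appears in at least one clause, then the second-order corrections to their energies coincide:
`∑_{y : d_H(x¹,y)=1} 1/(f(x¹) − f(y)) = ∑_{y : d_H(x²,y)=1} 1/(f(x²) − f(y))`. -/
theorem stmt_10 (N M : ℕ) (C : Fin M → {s : Finset (Fin N) // s.card = 3})
    (x₁ x₂ : Fin N → Bool) (hx₁ : ec3Cost C x₁ = 0) (hx₂ : ec3Cost C x₂ = 0)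
    (hB : ∀ i : Fin N, 1 ≤ ec3B C i) :
    ∑ y ∈ Finset.univ.filter (fun y : Fin N → Bool => hammingDist x₁ y = 1),
        (1 : ℝ) / ((ec3Cost C x₁ : ℝ) - (ec3Cost C y : ℝ))
    = ∑ y ∈ Finset.univ.filter (fun y : Fin N → Bool => hammingDist x₂ y = 1),
        (1 : ℝ) / ((ec3Cost C x₂ : ℝ) - (ec3Cost C y : ℝ)) := by
  rw [ec3_sum_eq C x₁ hx₁, ec3_sum_eq C x₂ hx₂]
end

section
/- Let T be a tree on the vertex set Fin n (n ≥ 1). Then ∑_{p ∈ S_n} ∏_{j=1}^{n−1} 1/e_T(S_j^p) = 2^(n−1), where the sum ranges over all permutations p of Fin n, S_j^p = {p(1), …, p(j)} is the set of the first j vertices in the order given by p, and e_T(S) is the number of edges of T with exactly one endpoint in S. (Note that for a tree, e_T(S) ≥ 1 whenever S is a nonempty proper subset of the vertices, so all denominators are positive.) -/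
open scoped Classical
open Finset




noncomputable def cutCount {n : ℕ} (G : SimpleGraph (Fin n)) (S : Finset (Fin n)) : ℕ :=
  ((Finset.univ : Finset (Fin n × Fin n)).filter
    (fun p => p.1 ∈ S ∧ p.2 ∉ S ∧ G.Adj p.1 p.2)).card

lemma cutCount_empty {n : ℕ} (G : SimpleGraph (Fin n)) : cutCount G ∅ = 0 := by
  simp [cutCount]

lemma cutCount_univ {n : ℕ} (G : SimpleGraph (Fin n)) : cutCount G Finset.univ = 0 := by
  simp [cutCount]

lemma exists_cross {V : Type*} {G : SimpleGraph V} {S : Set V} :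
    ∀ {x y : V}, G.Walk x y → x ∈ S → y ∉ S → ∃ a b, a ∈ S ∧ b ∉ S ∧ G.Adj a b := by
  intro x y W
  induction W with
  | nil => intro hx hy; exact absurd hx hy
  | @cons u v w h W ih =>
    intro hx hy
    by_cases hv : v ∈ S
    · exact ih hv hy
    · exact ⟨u, v, hx, hv, h⟩

lemma cutCount_pos {n : ℕ} {G : SimpleGraph (Fin n)} (hG : G.Connected)
    {S : Finset (Fin n)} (h1 : S.Nonempty) (h2 : S ≠ Finset.univ) : 0 < cutCount G S := by
  obtain ⟨x, hx⟩ := h1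
  have : ∃ y, y ∉ S := by
    by_contra hc; push_neg at hc
    exact h2 (Finset.eq_univ_iff_forall.mpr hc)
  obtain ⟨y, hy⟩ := this
  obtain ⟨W⟩ := hG.preconnected x y
  obtain ⟨a, b, ha, hb, hadj⟩ := exists_cross (S := (S : Set (Fin n))) W
    (by simpa using hx) (by simpa using hy)
  rw [cutCount, Finset.card_pos]
  exact ⟨(a, b), by simp_all⟩

lemma exists_leaf {n : ℕ} (G : SimpleGraph (Fin (n+2))) (hT : G.IsTree) :
    ∃ ℓ : Fin (n+2), G.degree ℓ = 1 := by
  by_contra hc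
  push_neg at hc
  have hpos : ∀ v : Fin (n+2), 0 < G.degree v := by
    intro v
    rw [SimpleGraph.degree_pos_iff_exists_adj]
    have hne : (⟨0, by omega⟩ : Fin (n+2)) ≠ ⟨1, by omega⟩ := by simp
    have : ∃ w, w ≠ v := by
      by_cases h : v = ⟨0, by omega⟩
      · exact ⟨⟨1, by omega⟩, by simp [h]⟩
      · exact ⟨⟨0, by omega⟩, fun hh => h hh.symm⟩
    obtain ⟨w, hw⟩ := this
    obtain ⟨W⟩ := hT.isConnected.preconnected v w
    cases W with
    | nil => exact absurd rfl hw.symm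
    | cons h W => exact ⟨_, h⟩
  have h2 : ∀ v : Fin (n+2), 2 ≤ G.degree v := by
    intro v
    have := hpos v
    have := hc v
    omega
  have hsum : ∑ v : Fin (n+2), G.degree v = 2 * G.edgeFinset.card :=
    SimpleGraph.sum_degrees_eq_twice_card_edges G
  have hcard : G.edgeFinset.card + 1 = n + 2 := by
    simpa using hT.card_edgeFinset
  have hge : (Finset.univ : Finset (Fin (n+2))).card • 2 ≤ ∑ v : Fin (n+2), G.degree v :=
    Finset.card_nsmul_le_sum _ _ _ (fun x _ => h2 x)
  simp only [Finset.card_univ, Fintype.card_fin, smul_eq_mul] at hge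
  omega

lemma unique_nbr {n : ℕ} {G : SimpleGraph (Fin n)} {ℓ : Fin n} (h : G.degree ℓ = 1) :
    ∃ u, ∀ x, G.Adj ℓ x ↔ x = u := by
  rw [SimpleGraph.degree] at h
  obtain ⟨u, hu⟩ := Finset.card_eq_one.mp h
  exact ⟨u, fun x => by rw [← SimpleGraph.mem_neighborFinset, hu, Finset.mem_singleton]⟩

lemma descend {n : ℕ} (G : SimpleGraph (Fin (n+2))) (ℓ : Fin (n+2)) (u0 : Fin (n+2))
    (hu : ∀ x, G.Adj ℓ x ↔ x = u0) (N : ℕ) :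
    ∀ (x y : Fin (n+2)) (W : G.Walk x y), W.length ≤ N →
      ∀ a b : Fin (n+1), x = ℓ.succAbove a → y = ℓ.succAbove b →
      (G.comap ℓ.succAbove).Reachable a b := by
  induction N with
  | zero =>
    intro x y W hW a b hxa hyb
    have : x = y := SimpleGraph.Walk.eq_of_length_eq_zero (p := W) (Nat.le_zero.mp hW)
    subst hxa; subst hyb
    have : a = b := Fin.succAbove_right_injective this
    subst this; rfl
  | succ N ih =>
    intro x y W hW a b hxa hyb
    cases W with
    | nil =>
      have : a = b := Fin.succAbove_right_injective (hxa ▸ hyb ▸ rfl : ℓ.succAbove a = ℓ.succAbove b)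
      subst this; rfl
    | @cons _ z _ h W' =>
      rw [SimpleGraph.Walk.length_cons] at hW
      by_cases hz : z = ℓ
      · rw [hz] at h
        have hxu : x = u0 := (hu x).mp h.symm
        have hyℓ : y ≠ ℓ := by rw [hyb]; exact Fin.succAbove_ne ℓ b
        have hnil : ¬W'.Nil := SimpleGraph.Walk.not_nil_of_ne (fun hh => hyℓ (hh.symm.trans hz))
        have hadj : G.Adj z (W'.getVert 1) := SimpleGraph.Walk.adj_snd hnil
        have hsnd : W'.getVert 1 = u0 := (hu _).mp (by rw [← hz]; exact hadj)
        have hlen2 := SimpleGraph.Walk.length_tail_add_one hnil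
        refine ih x y ((W'.tail).copy (by rw [hxu]; exact hsnd) rfl) ?_ a b hxa hyb
        rw [SimpleGraph.Walk.length_copy]
        omega
      · obtain ⟨c, hc⟩ := Fin.exists_succAbove_eq hz
        have hT'adj : (G.comap ℓ.succAbove).Adj a c := by
          rw [SimpleGraph.comap_adj, ← hxa, hc]; exact h
        exact hT'adj.reachable.trans (ih z y W' (by omega) c b hc.symm hyb)

lemma deleted_isTree {n : ℕ} (G : SimpleGraph (Fin (n+2))) (ℓ : Fin (n+2)) (u0 : Fin (n+2))
    (hu : ∀ x, G.Adj ℓ x ↔ x = u0) (hT : G.IsTree) : (G.comap ℓ.succAbove).IsTree := by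
  constructor
  · rw [SimpleGraph.connected_iff]
    refine ⟨fun a b => ?_, inferInstance⟩
    obtain ⟨W⟩ := hT.isConnected.preconnected (ℓ.succAbove a) (ℓ.succAbove b)
    exact descend G ℓ u0 hu W.length _ _ W le_rfl a b rfl rfl
  · intro v c hc
    have hinj : Function.Injective (ℓ.succAbove) := Fin.succAbove_right_injective
    refine hT.IsAcyclic
      (c.map (SimpleGraph.Embedding.comap ⟨ℓ.succAbove, hinj⟩ G).toHom) ?_
    rw [SimpleGraph.Walk.map_isCycle_iff_of_injective
      (fun x y hxy => by simpa using hxy)]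
    exact hc



lemma lemA1 (k : ℕ) (hk : 1 ≤ k) (a : ℕ → ℝ) (h0 : a 0 = 0)
    (hpos : ∀ j, 1 ≤ j → j ≤ k - 1 → 0 < a j) :
    ∑ i ∈ range k, (∏ j ∈ Icc 1 i, 1 / a j) * (∏ j ∈ Icc i (k-1), 1 / (a j + 1))
      = ∏ j ∈ Icc 1 (k-1), 1 / a j := by
  induction k with
  | zero => omega
  | succ k ih =>
    rcases Nat.eq_or_lt_of_le hk with h1 | h2
    · -- k + 1 = 1, i.e. k = 0
      have hk0 : k = 0 := by omega
      subst hk0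
      simp [h0]
    · have hk1 : 1 ≤ k := by omega
      have hak : 0 < a k := hpos k hk1 (by omega)
      have hrw : ∀ i ∈ range k,
          (∏ j ∈ Icc 1 i, 1 / a j) * (∏ j ∈ Icc i (k+1-1), 1 / (a j + 1))
          = ((∏ j ∈ Icc 1 i, 1 / a j) * (∏ j ∈ Icc i (k-1), 1 / (a j + 1))) * (1 / (a k + 1)) := by
        intro i hi
        simp only [mem_range] at hi
        have : k + 1 - 1 = (k - 1) + 1 := by omega
        rw [this, Finset.prod_Icc_succ_top (by omega)]
        have : k - 1 + 1 = k := by omega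
        rw [this]; ring
      rw [Finset.sum_range_succ, Finset.sum_congr rfl hrw, ← Finset.sum_mul,
        ih hk1 (fun j h1 h2 => hpos j h1 (by omega))]
      have e1 : k + 1 - 1 = k := by omega
      rw [e1]
      have e2 : Icc k k = {k} := Finset.Icc_self k
      rw [e2, Finset.prod_singleton]
      have e3 : ∏ j ∈ Icc 1 k, 1 / a j = (∏ j ∈ Icc 1 (k-1), 1 / a j) * (1 / a k) := by
        have : k = (k-1) + 1 := by omega
        rw [this, Finset.prod_Icc_succ_top (by omega)]
        congr 2 <;> omega
      rw [e3]
      have hx : a k ≠ 0 := ne_of_gt hak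
      have hx1 : a k + 1 ≠ 0 := by positivity
      have key : (1:ℝ)/(a k+1) + (1/a k)*(1/(a k+1)) = 1/a k := by field_simp
      linear_combination (∏ j ∈ Icc 1 (k-1), 1 / a j) * key

lemma lemA2 (d : ℕ) : ∀ (m k : ℕ), 1 ≤ k → k + d = m → ∀ (a : ℕ → ℝ), a m = 0 →
    (∀ j, k ≤ j → j ≤ m - 1 → 0 < a j) →
    ∑ i ∈ Icc k m, (∏ j ∈ Icc k i, 1 / (a j + 1)) * (∏ j ∈ Icc i (m-1), 1 / a j)
      = ∏ j ∈ Icc k (m-1), 1 / a j := by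
  induction d with
  | zero =>
    intro m k hk1 hkm a hm hpos
    subst hkm
    have h1 : Icc k (k - 1) = (∅ : Finset ℕ) := by
      apply Finset.Icc_eq_empty; omega
    have hk0 : a k = 0 := by simpa using hm
    simp [h1, hk0]
  | succ d ih =>
    intro m k hk1 hkm a hm hpos
    have hkm' : k < m := by omega
    have hsplit : Icc k m = insert k (Icc (k+1) m) := by
      ext x; simp [Finset.mem_Icc, Finset.mem_insert]; omega
    rw [hsplit, Finset.sum_insert (by simp)]
    have hterm1 : (∏ j ∈ Icc k k, 1 / (a j + 1)) * (∏ j ∈ Icc k (m-1), 1 / a j)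
        = (1 / (a k + 1)) * ((1 / a k) * ∏ j ∈ Icc (k+1) (m-1), 1 / a j) := by
      rw [Finset.Icc_self, Finset.prod_singleton]
      have : Icc k (m-1) = insert k (Icc (k+1) (m-1)) := by
        ext x; simp [Finset.mem_Icc, Finset.mem_insert]; omega
      rw [this, Finset.prod_insert (by simp)]
    have hterm2 : ∀ i ∈ Icc (k+1) m,
        (∏ j ∈ Icc k i, 1 / (a j + 1)) * (∏ j ∈ Icc i (m-1), 1 / a j)
        = (1 / (a k + 1)) * ((∏ j ∈ Icc (k+1) i, 1 / (a j + 1)) * (∏ j ∈ Icc i (m-1), 1 / a j)) := by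
      intro i hi
      simp only [Finset.mem_Icc] at hi
      have : Icc k i = insert k (Icc (k+1) i) := by
        ext x; simp [Finset.mem_Icc, Finset.mem_insert]; omega
      rw [this, Finset.prod_insert (by simp)]
      ring
    rw [Finset.sum_congr rfl hterm2, ← Finset.mul_sum,
      ih m (k+1) (by omega) (by omega) a hm (fun j h1 h2 => hpos j (by omega) h2)]
    rw [hterm1]
    have hak : 0 < a k := hpos k le_rfl (by omega)
    have : Icc k (m-1) = insert k (Icc (k+1) (m-1)) := by
      ext x; simp [Finset.mem_Icc, Finset.mem_insert]; omega
    rw [this, Finset.prod_insert (by simp)]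
    have hx : a k ≠ 0 := ne_of_gt hak
    have hx1 : a k + 1 ≠ 0 := by positivity
    have key : (1:ℝ)/(a k+1) + (1/a k)*(1/(a k+1)) = 1/a k := by field_simp
    linear_combination (∏ j ∈ Icc (k+1) (m-1), 1 / a j) * key

lemma lemA (m k : ℕ) (hk1 : 1 ≤ k) (hkm : k ≤ m) (a : ℕ → ℝ) (h0 : a 0 = 0) (hm : a m = 0)
    (hpos : ∀ j, 1 ≤ j → j ≤ m - 1 → 0 < a j) :
    ∑ i ∈ range (m+1),
      (∏ j ∈ Icc 1 i, 1 / (a j + if k ≤ j then 1 else 0)) *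
      (∏ j ∈ Icc i (m-1), 1 / (a j + if j < k then 1 else 0))
    = 2 * ∏ j ∈ Icc 1 (m-1), 1 / a j := by
  have hm1 : 1 ≤ m := le_trans hk1 hkm
  -- split the sum over i into i < k and k ≤ i
  have hdisj : Disjoint (range k) (Icc k m) := by
    rw [Finset.disjoint_left]; intro x hx hx'
    simp [Finset.mem_range] at hx; simp [Finset.mem_Icc] at hx'; omega
  have hunion : range (m+1) = range k ∪ Icc k m := by
    ext x; simp [Finset.mem_range, Finset.mem_Icc, Finset.mem_union]; omega
  rw [hunion, Finset.sum_union hdisj]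
  -- first part
  have hP1 : ∀ i ∈ range k,
      (∏ j ∈ Icc 1 i, 1 / (a j + if k ≤ j then 1 else 0)) *
      (∏ j ∈ Icc i (m-1), 1 / (a j + if j < k then 1 else 0))
      = ((∏ j ∈ Icc 1 i, 1 / a j) * (∏ j ∈ Icc i (k-1), 1 / (a j + 1)))
        * (∏ j ∈ Icc k (m-1), 1 / a j) := by
    intro i hi
    simp only [Finset.mem_range] at hi
    have e1 : ∏ j ∈ Icc 1 i, 1 / (a j + if k ≤ j then 1 else 0) = ∏ j ∈ Icc 1 i, 1 / a j := by
      apply Finset.prod_congr rfl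
      intro j hj; simp only [Finset.mem_Icc] at hj
      rw [if_neg (by omega)]; ring_nf
    have e2 : Icc i (m-1) = Icc i (k-1) ∪ Icc k (m-1) := by
      ext x; simp [Finset.mem_Icc, Finset.mem_union]; omega
    have e3 : Disjoint (Icc i (k-1)) (Icc k (m-1)) := by
      rw [Finset.disjoint_left]; intro x hx hx'
      simp [Finset.mem_Icc] at hx hx'; omega
    rw [e1, e2, Finset.prod_union e3]
    have e4 : ∏ j ∈ Icc i (k-1), 1 / (a j + if j < k then 1 else 0)
        = ∏ j ∈ Icc i (k-1), 1 / (a j + 1) := by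
      apply Finset.prod_congr rfl
      intro j hj; simp only [Finset.mem_Icc] at hj
      rw [if_pos (by omega)]
    have e5 : ∏ j ∈ Icc k (m-1), 1 / (a j + if j < k then 1 else 0)
        = ∏ j ∈ Icc k (m-1), 1 / a j := by
      apply Finset.prod_congr rfl
      intro j hj; simp only [Finset.mem_Icc] at hj
      rw [if_neg (by omega)]; ring_nf
    rw [e4, e5]; ring
  -- second part
  have hP2 : ∀ i ∈ Icc k m,
      (∏ j ∈ Icc 1 i, 1 / (a j + if k ≤ j then 1 else 0)) *
      (∏ j ∈ Icc i (m-1), 1 / (a j + if j < k then 1 else 0))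
      = (∏ j ∈ Icc 1 (k-1), 1 / a j)
        * ((∏ j ∈ Icc k i, 1 / (a j + 1)) * (∏ j ∈ Icc i (m-1), 1 / a j)) := by
    intro i hi
    simp only [Finset.mem_Icc] at hi
    have e2 : Icc 1 i = Icc 1 (k-1) ∪ Icc k i := by
      ext x; simp [Finset.mem_Icc, Finset.mem_union]; omega
    have e3 : Disjoint (Icc 1 (k-1)) (Icc k i) := by
      rw [Finset.disjoint_left]; intro x hx hx'
      simp [Finset.mem_Icc] at hx hx'; omega
    rw [e2, Finset.prod_union e3]
    have e4 : ∏ j ∈ Icc 1 (k-1), 1 / (a j + if k ≤ j then 1 else 0)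
        = ∏ j ∈ Icc 1 (k-1), 1 / a j := by
      apply Finset.prod_congr rfl
      intro j hj; simp only [Finset.mem_Icc] at hj
      rw [if_neg (by omega)]; ring_nf
    have e5 : ∏ j ∈ Icc k i, 1 / (a j + if k ≤ j then 1 else 0)
        = ∏ j ∈ Icc k i, 1 / (a j + 1) := by
      apply Finset.prod_congr rfl
      intro j hj; simp only [Finset.mem_Icc] at hj
      rw [if_pos (by omega)]
    have e6 : ∏ j ∈ Icc i (m-1), 1 / (a j + if j < k then 1 else 0)
        = ∏ j ∈ Icc i (m-1), 1 / a j := by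
      apply Finset.prod_congr rfl
      intro j hj; simp only [Finset.mem_Icc] at hj
      rw [if_neg (by omega)]; ring_nf
    rw [e4, e5, e6]; ring
  rw [Finset.sum_congr rfl hP1, Finset.sum_congr rfl hP2, ← Finset.sum_mul, ← Finset.mul_sum]
  rw [lemA1 k hk1 a h0 (fun j h1 h2 => hpos j h1 (by omega)),
    lemA2 (m - k) m k hk1 (by omega) a hm (fun j h1 h2 => hpos j (by omega) h2)]
  have : Icc 1 (m-1) = Icc 1 (k-1) ∪ Icc k (m-1) := by
    ext x; simp [Finset.mem_Icc, Finset.mem_union]; omega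
  have hdisj2 : Disjoint (Icc 1 (k-1)) (Icc k (m-1)) := by
    rw [Finset.disjoint_left]; intro x hx hx'
    simp [Finset.mem_Icc] at hx hx'; omega
  rw [this, Finset.prod_union hdisj2]
  ring



section CutLemmas

variable {n : ℕ} {G : SimpleGraph (Fin (n+2))} {ℓ u0 : Fin (n+2)}
  (hu : ∀ x, G.Adj ℓ x ↔ x = u0) {u' : Fin (n+1)} (hu' : ℓ.succAbove u' = u0)

lemma mem_image_succAbove (S' : Finset (Fin (n+1))) (b : Fin (n+1)) :
    ℓ.succAbove b ∈ S'.image ℓ.succAbove ↔ b ∈ S' := by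
  rw [Finset.mem_image]
  constructor
  · rintro ⟨c, hc, hcb⟩
    rwa [Fin.succAbove_right_injective hcb] at hc
  · exact fun h => ⟨b, h, rfl⟩

lemma ell_not_mem_image (S' : Finset (Fin (n+1))) : ℓ ∉ S'.image ℓ.succAbove := by
  rw [Finset.mem_image]
  rintro ⟨c, _, hc⟩
  exact Fin.succAbove_ne ℓ c hc

lemma card_cross_main (S' : Finset (Fin (n+1))) (S : Finset (Fin (n+2)))
    (hS : ∀ x, x ≠ ℓ → (x ∈ S ↔ ∀ b, x = ℓ.succAbove b → b ∈ S')) :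
    ((Finset.univ : Finset (Fin (n+2) × Fin (n+2))).filter
      (fun p => (p.1 ∈ S ∧ p.2 ∉ S ∧ G.Adj p.1 p.2) ∧ p.2 ≠ ℓ ∧ p.1 ≠ ℓ)).card
    = cutCount (G.comap ℓ.succAbove) S' := by
  rw [cutCount]
  symm
  apply Finset.card_bij (fun p _ => ((ℓ.succAbove p.1, ℓ.succAbove p.2) : Fin (n+2) × Fin (n+2)))
  · rintro ⟨a, b⟩ hab
    simp only [Finset.mem_filter, Finset.mem_univ, true_and] at hab ⊢
    obtain ⟨ha, hb, hadj⟩ := hab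
    refine ⟨⟨?_, ?_, ?_⟩, Fin.succAbove_ne ℓ b, Fin.succAbove_ne ℓ a⟩
    · rw [hS _ (Fin.succAbove_ne ℓ a)]
      intro c hc
      exact (Fin.succAbove_right_injective hc) ▸ ha
    · rw [hS _ (Fin.succAbove_ne ℓ b)]
      push_neg
      exact ⟨b, rfl, hb⟩
    · exact (SimpleGraph.comap_adj.mp hadj)
  · rintro ⟨a, b⟩ _ ⟨c, d⟩ _ h
    simp only [Prod.mk.injEq] at h
    exact Prod.ext (Fin.succAbove_right_injective h.1) (Fin.succAbove_right_injective h.2)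
  · rintro ⟨x, y⟩ hxy
    simp only [Finset.mem_filter, Finset.mem_univ, true_and] at hxy
    obtain ⟨⟨hx, hy, hadj⟩, hy2, hx2⟩ := hxy
    obtain ⟨a, ha⟩ := Fin.exists_succAbove_eq hx2
    obtain ⟨b, hb⟩ := Fin.exists_succAbove_eq hy2
    refine ⟨(a, b), ?_, by simp [ha, hb]⟩
    simp only [Finset.mem_filter, Finset.mem_univ, true_and]
    refine ⟨?_, ?_, ?_⟩
    · exact ((hS x hx2).mp hx) a ha.symm
    · intro hbS
      apply hy
      rw [hS y hy2]
      intro c hc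
      rw [← hb] at hc
      exact (Fin.succAbove_right_injective hc.symm) ▸ hbS
    · rw [SimpleGraph.comap_adj, ha, hb]; exact hadj

include hu hu' in
lemma cut_image (S' : Finset (Fin (n+1))) :
    cutCount G (S'.image ℓ.succAbove)
      = cutCount (G.comap ℓ.succAbove) S' + (if u' ∈ S' then 1 else 0) := by
  set S := S'.image ℓ.succAbove with hSdef
  set C : Fin (n+2) × Fin (n+2) → Prop := fun p => p.1 ∈ S ∧ p.2 ∉ S ∧ G.Adj p.1 p.2 with hC
  have hsplit := Finset.card_filter_add_card_filter_not
    (s := Finset.univ.filter C) (p := fun p : Fin (n+2) × Fin (n+2) => p.2 = ℓ)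
  have hA : ((Finset.univ.filter C).filter (fun p : Fin (n+2) × Fin (n+2) => p.2 = ℓ)).card
      = if u' ∈ S' then 1 else 0 := by
    rw [Finset.filter_filter]
    by_cases hmem : u' ∈ S'
    · rw [if_pos hmem, Finset.card_eq_one]
      refine ⟨(u0, ℓ), ?_⟩
      ext ⟨x, y⟩
      simp only [hC, Finset.mem_filter, Finset.mem_univ, true_and, Finset.mem_singleton,
        Prod.mk.injEq]
      constructor
      · rintro ⟨⟨hx, -, hadj⟩, rfl⟩
        exact ⟨(hu x).mp hadj.symm, rfl⟩
      · rintro ⟨hx, hy⟩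
        subst hy
        refine ⟨⟨?_, ?_, ?_⟩, rfl⟩
        · rw [hx, hSdef, ← hu']; exact Finset.mem_image_of_mem _ hmem
        · rw [hSdef]; exact ell_not_mem_image S'
        · rw [hx]; exact ((hu u0).mpr rfl).symm
    · rw [if_neg hmem, Finset.card_eq_zero, Finset.filter_eq_empty_iff]
      rintro ⟨x, y⟩ -
      simp only [hC, not_and]
      rintro ⟨hx, -, hadj⟩ rfl
      have : x = u0 := (hu x).mp hadj.symm
      subst this
      rw [hSdef, ← hu', mem_image_succAbove] at hx
      exact hmem hx
  have hB : ((Finset.univ.filter C).filter (fun p : Fin (n+2) × Fin (n+2) => ¬p.2 = ℓ)).card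
      = cutCount (G.comap ℓ.succAbove) S' := by
    rw [Finset.filter_filter]
    rw [← card_cross_main S' S (fun x hx => by
      rw [hSdef]
      constructor
      · intro hmem b hb
        rw [hb] at hmem
        exact (mem_image_succAbove S' b).mp hmem
      · intro hall
        obtain ⟨b, hb⟩ := Fin.exists_succAbove_eq hx
        rw [← hb, mem_image_succAbove]
        exact hall b hb.symm)]
    congr 1
    apply Finset.filter_congr
    rintro ⟨x, y⟩ -
    simp only [hC]
    constructor
    · rintro ⟨h1, h2⟩
      refine ⟨h1, h2, ?_⟩
      rintro rfl
      exact (ell_not_mem_image S') h1.1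
    · rintro ⟨h1, h2, -⟩
      exact ⟨h1, h2⟩
  rw [cutCount, ← hsplit, hA, hB]
  omega

include hu hu' in
lemma cut_insert (S' : Finset (Fin (n+1))) :
    cutCount G (insert ℓ (S'.image ℓ.succAbove))
      = cutCount (G.comap ℓ.succAbove) S' + (if u' ∈ S' then 0 else 1) := by
  have hu0ℓ : u0 ≠ ℓ := by
    intro h
    exact G.irrefl (h ▸ (hu u0).mpr rfl)
  set S := insert ℓ (S'.image ℓ.succAbove) with hSdef
  set C : Fin (n+2) × Fin (n+2) → Prop := fun p => p.1 ∈ S ∧ p.2 ∉ S ∧ G.Adj p.1 p.2 with hC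
  have hsplit := Finset.card_filter_add_card_filter_not
    (s := Finset.univ.filter C) (p := fun p : Fin (n+2) × Fin (n+2) => p.1 = ℓ)
  have hA : ((Finset.univ.filter C).filter (fun p : Fin (n+2) × Fin (n+2) => p.1 = ℓ)).card
      = if u' ∈ S' then 0 else 1 := by
    rw [Finset.filter_filter]
    by_cases hmem : u' ∈ S'
    · rw [if_pos hmem, Finset.card_eq_zero, Finset.filter_eq_empty_iff]
      rintro ⟨x, y⟩ -
      simp only [hC, not_and]
      rintro ⟨-, hy, hadj⟩ rfl
      have : y = u0 := (hu y).mp hadj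
      subst this
      apply hy
      rw [hSdef]
      exact Finset.mem_insert_of_mem (by rw [← hu']; exact Finset.mem_image_of_mem _ hmem)
    · rw [if_neg hmem, Finset.card_eq_one]
      refine ⟨(ℓ, u0), ?_⟩
      ext ⟨x, y⟩
      simp only [hC, Finset.mem_filter, Finset.mem_univ, true_and, Finset.mem_singleton,
        Prod.mk.injEq]
      constructor
      · rintro ⟨⟨-, -, hadj⟩, rfl⟩
        exact ⟨rfl, (hu y).mp hadj⟩
      · rintro ⟨hx, hy⟩
        subst hx
        refine ⟨⟨by rw [hSdef]; exact Finset.mem_insert_self _ _, ?_,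
          by rw [hy]; exact (hu u0).mpr rfl⟩, rfl⟩
        rw [hy, hSdef, Finset.mem_insert]
        push_neg
        refine ⟨hu0ℓ, ?_⟩
        rw [← hu', mem_image_succAbove]
        exact hmem
  have hB : ((Finset.univ.filter C).filter (fun p : Fin (n+2) × Fin (n+2) => ¬p.1 = ℓ)).card
      = cutCount (G.comap ℓ.succAbove) S' := by
    rw [Finset.filter_filter]
    rw [← card_cross_main S' S (fun x hx => by
      rw [hSdef, Finset.mem_insert]
      constructor
      · rintro (h | hmem) b hb
        · exact absurd h hx
        · rw [hb] at hmem
          exact (mem_image_succAbove S' b).mp hmem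
      · intro hall
        right
        obtain ⟨b, hb⟩ := Fin.exists_succAbove_eq hx
        rw [← hb, mem_image_succAbove]
        exact hall b hb.symm)]
    congr 1
    apply Finset.filter_congr
    rintro ⟨x, y⟩ -
    simp only [hC]
    constructor
    · rintro ⟨h1, h2⟩
      refine ⟨h1, fun h3 => h1.2.1 (by rw [h3, hSdef]; exact Finset.mem_insert_self ℓ _), h2⟩
    · rintro ⟨h1, -, h2⟩
      exact ⟨h1, h2⟩
  rw [cutCount, ← hsplit, hA, hB]
  omega

end CutLemmas


noncomputable def insPerm {n : ℕ} (ℓ : Fin (n+2)) (iq : Fin (n+2) × Equiv.Perm (Fin (n+1))) :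
    Equiv.Perm (Fin (n+2)) :=
  (finSuccEquiv' iq.1).trans (iq.2.optionCongr.trans (finSuccEquiv' ℓ).symm)

lemma insPerm_at {n : ℕ} (ℓ : Fin (n+2)) (i : Fin (n+2)) (q : Equiv.Perm (Fin (n+1))) :
    insPerm ℓ (i, q) i = ℓ := by
  simp [insPerm]

lemma insPerm_succAbove {n : ℕ} (ℓ : Fin (n+2)) (i : Fin (n+2)) (q : Equiv.Perm (Fin (n+1)))
    (t : Fin (n+1)) : insPerm ℓ (i, q) (i.succAbove t) = ℓ.succAbove (q t) := by
  simp [insPerm]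

lemma insPerm_symm_at {n : ℕ} (ℓ : Fin (n+2)) (i : Fin (n+2)) (q : Equiv.Perm (Fin (n+1))) :
    (insPerm ℓ (i, q)).symm ℓ = i := by
  rw [Equiv.symm_apply_eq]
  exact (insPerm_at ℓ i q).symm

lemma insPerm_symm_succAbove {n : ℕ} (ℓ : Fin (n+2)) (i : Fin (n+2)) (q : Equiv.Perm (Fin (n+1)))
    (b : Fin (n+1)) : (insPerm ℓ (i, q)).symm (ℓ.succAbove b) = i.succAbove (q.symm b) := by
  rw [Equiv.symm_apply_eq, insPerm_succAbove, Equiv.apply_symm_apply]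

lemma insPerm_bijective {n : ℕ} (ℓ : Fin (n+2)) : Function.Bijective (insPerm ℓ) := by
  rw [Fintype.bijective_iff_injective_and_card]
  constructor
  · rintro ⟨i, q⟩ ⟨i', q'⟩ h
    have hi : i = i' := by
      have h1 := insPerm_symm_at ℓ i q
      have h2 := insPerm_symm_at ℓ i' q'
      rw [← h] at h2
      exact h1 ▸ h2 ▸ rfl
    subst hi
    have hq : q = q' := by
      apply Equiv.ext; intro t
      have h1 := insPerm_succAbove ℓ i q t
      have h2 := insPerm_succAbove ℓ i q' t
      rw [← h] at h2
      exact Fin.succAbove_right_injective (h1.symm.trans h2)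
    rw [hq]
  · simp [Fintype.card_perm, Fintype.card_prod, Fintype.card_fin, Nat.factorial_succ]

lemma val_succAbove {n : ℕ} (i : Fin (n+2)) (t : Fin (n+1)) :
    ((i.succAbove t) : ℕ) = if (t : ℕ) < (i : ℕ) then (t : ℕ) else (t : ℕ) + 1 := by
  rcases lt_or_ge ((t : ℕ)) ((i : ℕ)) with h | h
  · rw [if_pos h, Fin.succAbove_of_castSucc_lt _ _ (by rwa [Fin.lt_def, Fin.coe_castSucc])]
    exact Fin.coe_castSucc t
  · rw [if_neg (not_lt.mpr h), Fin.succAbove_of_le_castSucc _ _ (by rwa [Fin.le_def, Fin.coe_castSucc])]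
    exact Fin.val_succ t

lemma chain_le {n : ℕ} (ℓ : Fin (n+2)) (i : Fin (n+2)) (q : Equiv.Perm (Fin (n+1))) (j : ℕ)
    (hj : j ≤ (i : ℕ)) :
    (Finset.univ.filter fun v : Fin (n+2) => ((insPerm ℓ (i, q)).symm v).val < j)
    = (Finset.univ.filter fun b : Fin (n+1) => (q.symm b).val < j).image ℓ.succAbove := by
  ext v
  by_cases hv : v = ℓ
  · subst hv
    simp only [Finset.mem_filter, Finset.mem_univ, true_and, insPerm_symm_at]
    constructor
    · intro h; omega
    · intro hmem; exact absurd hmem (ell_not_mem_image _)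
  · obtain ⟨b, hb⟩ := Fin.exists_succAbove_eq hv
    subst hb
    rw [mem_image_succAbove]
    simp only [Finset.mem_filter, Finset.mem_univ, true_and, insPerm_symm_succAbove,
      val_succAbove]
    split_ifs with h <;> omega

lemma chain_gt {n : ℕ} (ℓ : Fin (n+2)) (i : Fin (n+2)) (q : Equiv.Perm (Fin (n+1))) (j : ℕ)
    (hj : (i : ℕ) < j) :
    (Finset.univ.filter fun v : Fin (n+2) => ((insPerm ℓ (i, q)).symm v).val < j)
    = insert ℓ ((Finset.univ.filter fun b : Fin (n+1) => (q.symm b).val < j - 1).image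
        ℓ.succAbove) := by
  ext v
  by_cases hv : v = ℓ
  · subst hv
    simp only [Finset.mem_filter, Finset.mem_univ, true_and, insPerm_symm_at,
      Finset.mem_insert]
    constructor
    · intro _; left; trivial
    · intro _; omega
  · obtain ⟨b, hb⟩ := Fin.exists_succAbove_eq hv
    subst hb
    rw [Finset.mem_insert]
    have h1 : (ℓ.succAbove b = ℓ) = False := by
      simp [Fin.succAbove_ne ℓ b]
    rw [h1, mem_image_succAbove]
    simp only [Finset.mem_filter, Finset.mem_univ, true_and, insPerm_symm_succAbove,
      val_succAbove, false_or]
    split_ifs with h <;> omega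

lemma tree_inner_sum {n : ℕ} (G : SimpleGraph (Fin (n+2))) (hT : G.IsTree)
    (ℓ u0 : Fin (n+2)) (hu : ∀ x, G.Adj ℓ x ↔ x = u0)
    (u' : Fin (n+1)) (hu' : ℓ.succAbove u' = u0) (q : Equiv.Perm (Fin (n+1))) :
    ∑ i : Fin (n+2), ∏ j ∈ Finset.Icc 1 (n+1),
        (1 : ℝ) / (cutCount G (Finset.univ.filter
          (fun v : Fin (n+2) => ((insPerm ℓ (i, q)).symm v).val < j)) : ℝ)
    = 2 * ∏ j ∈ Finset.Icc 1 n,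
        (1 : ℝ) / (cutCount (G.comap ℓ.succAbove) (Finset.univ.filter
          (fun b : Fin (n+1) => (q.symm b).val < j)) : ℝ) := by
  have hT' : (G.comap ℓ.succAbove).IsTree := deleted_isTree G ℓ u0 hu hT
  set k : ℕ := (q.symm u').val + 1 with hk
  have hkn : k ≤ n + 1 := by
    have := (q.symm u').isLt; omega
  have h0 : (fun j : ℕ => (cutCount (G.comap ℓ.succAbove) (Finset.univ.filter
      (fun b : Fin (n+1) => (q.symm b).val < j)) : ℝ)) 0 = 0 := by
    simp only
    have he : (Finset.univ.filter (fun b : Fin (n+1) => (q.symm b).val < 0)) = ∅ := by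
      apply Finset.filter_false_of_mem; intro b _; omega
    rw [he, cutCount_empty, Nat.cast_zero]
  have hm : (fun j : ℕ => (cutCount (G.comap ℓ.succAbove) (Finset.univ.filter
      (fun b : Fin (n+1) => (q.symm b).val < j)) : ℝ)) (n+1) = 0 := by
    simp only
    have he : (Finset.univ.filter (fun b : Fin (n+1) => (q.symm b).val < (n+1)))
        = Finset.univ := by
      apply Finset.filter_true_of_mem; intro b _; exact (q.symm b).isLt
    rw [he, cutCount_univ, Nat.cast_zero]
  have hpos : ∀ j, 1 ≤ j → j ≤ (n+1) - 1 → 0 < (fun j : ℕ =>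
      (cutCount (G.comap ℓ.succAbove) (Finset.univ.filter
        (fun b : Fin (n+1) => (q.symm b).val < j)) : ℝ)) j := by
    intro j h1 h2
    simp only [Nat.cast_pos]
    apply cutCount_pos hT'.isConnected
    · refine ⟨q ⟨0, by omega⟩, ?_⟩
      simp only [Finset.mem_filter, Finset.mem_univ, true_and, Equiv.symm_apply_apply]
      omega
    · intro hEq
      have hmem : q ⟨n, by omega⟩ ∈ (Finset.univ.filter
          (fun b : Fin (n+1) => (q.symm b).val < j)) := by
        rw [hEq]; exact Finset.mem_univ _
      simp only [Finset.mem_filter, Finset.mem_univ, true_and,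
        Equiv.symm_apply_apply] at hmem
      omega
  have humem : ∀ j : ℕ,
      (u' ∈ Finset.univ.filter (fun b : Fin (n+1) => (q.symm b).val < j)) ↔ k ≤ j := by
    intro j
    simp only [Finset.mem_filter, Finset.mem_univ, true_and]
    omega
  have per_i : ∀ i : Fin (n+2),
      (∏ j ∈ Finset.Icc 1 (n+1), (1 : ℝ) / (cutCount G (Finset.univ.filter
          (fun v : Fin (n+2) => ((insPerm ℓ (i, q)).symm v).val < j)) : ℝ))
      = (∏ j ∈ Finset.Icc 1 (i : ℕ), 1 / ((cutCount (G.comap ℓ.succAbove)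
            (Finset.univ.filter (fun b : Fin (n+1) => (q.symm b).val < j)) : ℝ)
            + if k ≤ j then 1 else 0)) *
        (∏ j ∈ Finset.Icc (i : ℕ) ((n+1)-1), 1 / ((cutCount (G.comap ℓ.succAbove)
            (Finset.univ.filter (fun b : Fin (n+1) => (q.symm b).val < j)) : ℝ)
            + if j < k then 1 else 0)) := by
    intro i
    have hin : (i : ℕ) ≤ n + 1 := by have := i.isLt; omega
    have hsplit : Finset.Icc 1 (n+1) = Finset.Icc 1 (i : ℕ) ∪ Finset.Icc ((i : ℕ)+1) (n+1) := by
      ext x; simp only [Finset.mem_Icc, Finset.mem_union]; omega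
    have hdisj : Disjoint (Finset.Icc 1 (i : ℕ)) (Finset.Icc ((i : ℕ)+1) (n+1)) := by
      rw [Finset.disjoint_left]; intro x hx hx'
      simp only [Finset.mem_Icc] at hx hx'; omega
    rw [hsplit, Finset.prod_union hdisj]
    congr 1
    · apply Finset.prod_congr rfl
      intro j hj
      simp only [Finset.mem_Icc] at hj
      rw [chain_le ℓ i q j (by omega), cut_image hu hu']
      by_cases hc : k ≤ j
      · rw [if_pos ((humem j).mpr hc), if_pos hc]
        push_cast
        ring
      · rw [if_neg (fun hmm => hc ((humem j).mp hmm)), if_neg hc]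
        push_cast
        ring
    · rw [show ((n+1) - 1) = n from rfl]
      rw [← Finset.map_add_right_Icc (i : ℕ) n 1, Finset.prod_map]
      apply Finset.prod_congr rfl
      intro j hj
      simp only [Finset.mem_Icc] at hj
      have hemb : (addRightEmbedding 1) j = j + 1 := rfl
      rw [hemb, chain_gt ℓ i q (j+1) (by omega)]
      rw [show j + 1 - 1 = j from rfl]
      rw [cut_insert hu hu']
      by_cases hc : j < k
      · rw [if_neg (fun hmm => by have := (humem j).mp hmm; omega), if_pos hc]
        push_cast
        ring
      · rw [if_pos ((humem j).mpr (by omega)), if_neg hc]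
        push_cast
        ring
  rw [Finset.sum_congr rfl (fun i _ => per_i i)]
  rw [Fin.sum_univ_eq_sum_range (fun i =>
      (∏ j ∈ Finset.Icc 1 i, 1 / ((cutCount (G.comap ℓ.succAbove)
            (Finset.univ.filter (fun b : Fin (n+1) => (q.symm b).val < j)) : ℝ)
            + if k ≤ j then 1 else 0)) *
        (∏ j ∈ Finset.Icc i ((n+1)-1), 1 / ((cutCount (G.comap ℓ.succAbove)
            (Finset.univ.filter (fun b : Fin (n+1) => (q.symm b).val < j)) : ℝ)
            + if j < k then 1 else 0))) (n+2)]
  have hmain := lemA (n+1) k (by omega) hkn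
    (fun j : ℕ => (cutCount (G.comap ℓ.succAbove) (Finset.univ.filter
      (fun b : Fin (n+1) => (q.symm b).val < j)) : ℝ)) h0 hm hpos
  beta_reduce at hmain
  exact hmain

theorem main_tree : ∀ (m : ℕ) (G : SimpleGraph (Fin (m+1))), G.IsTree →
    ∑ p : Equiv.Perm (Fin (m+1)),
        ∏ j ∈ Finset.Icc 1 m,
          (1 : ℝ) / (cutCount G (Finset.univ.filter
            (fun v : Fin (m+1) => (p.symm v).val < j)) : ℝ)
    = 2 ^ m := by
  intro m
  induction m with
  | zero =>
    intro G hT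
    rw [show (Finset.Icc 1 0) = (∅ : Finset ℕ) from rfl]
    simp [Fintype.card_perm]
  | succ m IH =>
    intro G hT
    obtain ⟨ℓ, hdeg⟩ := exists_leaf G hT
    obtain ⟨u0, hu⟩ := unique_nbr hdeg
    have hu0ℓ : u0 ≠ ℓ := fun h => G.irrefl (h ▸ (hu u0).mpr rfl)
    obtain ⟨u', hu'⟩ := Fin.exists_succAbove_eq hu0ℓ
    have hreindex := Fintype.sum_bijective (insPerm ℓ) (insPerm_bijective ℓ)
      (fun iq : Fin (m+2) × Equiv.Perm (Fin (m+1)) =>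
        ∏ j ∈ Finset.Icc 1 (m+1),
          (1 : ℝ) / (cutCount G (Finset.univ.filter
            (fun v : Fin (m+2) => ((insPerm ℓ iq).symm v).val < j)) : ℝ))
      (fun p : Equiv.Perm (Fin (m+2)) =>
        ∏ j ∈ Finset.Icc 1 (m+1),
          (1 : ℝ) / (cutCount G (Finset.univ.filter
            (fun v : Fin (m+2) => (p.symm v).val < j)) : ℝ))
      (fun iq => rfl)
    rw [← hreindex, Fintype.sum_prod_type, Finset.sum_comm]
    have hinner : ∀ q : Equiv.Perm (Fin (m+1)),
        ∑ i : Fin (m+2), ∏ j ∈ Finset.Icc 1 (m+1),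
          (1 : ℝ) / (cutCount G (Finset.univ.filter
            (fun v : Fin (m+2) => ((insPerm ℓ (i, q)).symm v).val < j)) : ℝ)
        = 2 * ∏ j ∈ Finset.Icc 1 m,
            (1 : ℝ) / (cutCount (G.comap ℓ.succAbove) (Finset.univ.filter
              (fun b : Fin (m+1) => (q.symm b).val < j)) : ℝ) :=
      fun q => tree_inner_sum G hT ℓ u0 hu u' hu' q
    rw [Finset.sum_congr rfl (fun q _ => hinner q), ← Finset.mul_sum,
      IH (G.comap ℓ.succAbove) (deleted_isTree G ℓ u0 hu hT)]
    ring

/-- Let `T` be a tree on `Fin n` (`n ≥ 1`). Then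
`∑_{p ∈ S_n} ∏_{j=1}^{n−1} 1/e_T(S_j^p) = 2^(n−1)`, where `S_j^p` is the set of the first
`j` vertices in the order given by the permutation `p`. -/
theorem stmt_14 (n : ℕ) (hn : 1 ≤ n) (G : SimpleGraph (Fin n)) (hT : G.IsTree) :
    ∑ p : Equiv.Perm (Fin n),
        ∏ j ∈ Finset.Icc 1 (n - 1),
          (1 : ℝ) / (cutCount G (Finset.univ.filter (fun v : Fin n => (p.symm v).val < j)) : ℝ)
    = 2 ^ (n - 1) := by
  obtain ⟨m, rfl⟩ : ∃ m, n = m + 1 := ⟨n - 1, by omega⟩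
  rw [show m + 1 - 1 = m from rfl]
  exact main_tree m G hT
end

section
/- Let G be a connected simple graph on the vertex set Fin n (n ≥ 1) and let m assign to each edge of G a multiplicity m(e) ≥ 1 (a positive natural number). For S ⊆ Fin n let e(S) = ∑_{edges e with exactly one endpoint in S} m(e). Then ∑_{p ∈ S_n} ∏_{j=1}^{n−1} 1/e(S_j^p) ≤ 2^(n−1), where the sum is over all permutations p of Fin n and S_j^p = {p(1), …, p(j)}. (Connectedness of G guarantees e(S) ≥ 1 for every nonempty proper subset S, so all denominators are positive.) -/
open scoped Classical

/-- `e(S)`: the total multiplicity of edges of `G` with exactly one endpoint in `S`, summed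
over ordered pairs `(i, j)` with `i ∈ S`, `j ∉ S` and `i ~ j` (each cut edge gives exactly
one such pair). -/
noncomputable def weightedCut {n : ℕ} (G : SimpleGraph (Fin n)) (m : Sym2 (Fin n) → ℕ)
    (S : Finset (Fin n)) : ℕ :=
  ∑ p ∈ ((Finset.univ : Finset (Fin n × Fin n)).filter
      (fun p => p.1 ∈ S ∧ p.2 ∉ S ∧ G.Adj p.1 p.2)),
    m s(p.1, p.2)

open Finset


noncomputable def Ecut {n : ℕ} (par : Fin (n+1) → Fin (n+1)) (S : Finset (Fin (n+1))) : ℕ :=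
  ∑ i : Fin (n+1), if i ≠ 0 ∧ ¬((i ∈ S) ↔ (par i ∈ S)) then 1 else 0

lemma Ecut_empty {n : ℕ} (par : Fin (n+1) → Fin (n+1)) : Ecut par ∅ = 0 := by
  simp [Ecut]

lemma Ecut_univ {n : ℕ} (par : Fin (n+1) → Fin (n+1)) : Ecut par univ = 0 := by
  simp [Ecut]

lemma Ecut_pos {n : ℕ} (par : Fin (n+1) → Fin (n+1)) (hpar : ∀ i, i ≠ 0 → par i < i)
    (S : Finset (Fin (n+1))) (h1 : S.Nonempty) (h2 : S ≠ univ) : 1 ≤ Ecut par S := by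
  have main : ∀ m : ℕ, ∀ t : Fin (n+1), t.val ≤ m → ((0 ∈ S ∧ t ∉ S) ∨ (0 ∉ S ∧ t ∈ S)) →
      ∃ i, i ≠ 0 ∧ ¬((i ∈ S) ↔ (par i ∈ S)) := by
    intro m
    induction m with
    | zero =>
      intro t ht hcond
      have : t = 0 := by
        apply Fin.ext; simpa using ht
      subst this
      rcases hcond with ⟨h,h'⟩|⟨h,h'⟩
      · exact absurd h h'
      · exact absurd h' h
    | succ m IH =>
      intro t ht hcond
      have ht0 : t ≠ 0 := by
        rintro rfl
        rcases hcond with ⟨h,h'⟩|⟨h,h'⟩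
        · exact absurd h h'
        · exact absurd h' h
      by_cases hcross : (t ∈ S) ↔ (par t ∈ S)
      · refine IH (par t) ?_ ?_
        · have := hpar t ht0
          have := Fin.lt_def.mp this
          omega
        · rcases hcond with ⟨h,h'⟩|⟨h,h'⟩
          · exact Or.inl ⟨h, fun hc => h' (hcross.mpr hc)⟩
          · exact Or.inr ⟨h, hcross.mp h'⟩
      · exact ⟨t, ht0, hcross⟩
  have hex : ∃ i, i ≠ 0 ∧ ¬((i ∈ S) ↔ (par i ∈ S)) := by
    by_cases h0 : (0 : Fin (n+1)) ∈ S
    · obtain ⟨t, ht⟩ : ∃ t, t ∉ S := by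
        by_contra hc
        push_neg at hc
        exact h2 (Finset.eq_univ_of_forall hc)
      exact main t.val t le_rfl (Or.inl ⟨h0, ht⟩)
    · obtain ⟨t, ht⟩ := h1
      exact main t.val t le_rfl (Or.inr ⟨h0, ht⟩)
  obtain ⟨i, hi⟩ := hex
  unfold Ecut
  calc (1 : ℕ) = if i ≠ 0 ∧ ¬((i ∈ S) ↔ (par i ∈ S)) then 1 else 0 := by rw [if_pos hi]
  _ ≤ _ := Finset.single_le_sum
      (f := fun i => if i ≠ 0 ∧ ¬((i ∈ S) ↔ (par i ∈ S)) then (1:ℕ) else 0)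
      (fun _ _ => by positivity) (mem_univ i)

/-- the parent function for the subtree on the first `n+1` vertices. -/
noncomputable def parChild {n : ℕ} (par : Fin (n+2) → Fin (n+2)) (w : Fin (n+1)) : Fin (n+1) :=
  if h : (par w.castSucc).val < n+1 then ⟨(par w.castSucc).val, h⟩ else 0

/-- the parent of the removed last vertex, as a vertex of the subtree. -/
noncomputable def uChild {n : ℕ} (par : Fin (n+2) → Fin (n+2)) : Fin (n+1) :=
  if h : (par (Fin.last (n+1))).val < n+1 then ⟨(par (Fin.last (n+1))).val, h⟩ else 0

section child
variable {n : ℕ} (par : Fin (n+2) → Fin (n+2))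

lemma castSucc_parChild (hpar : ∀ i, i ≠ 0 → par i < i) (w : Fin (n+1)) (hw : w ≠ 0) :
    (parChild par w).castSucc = par w.castSucc := by
  have h1 : w.castSucc ≠ 0 := by
    exact Fin.castSucc_ne_zero_iff.mpr hw
  have h2 := Fin.lt_def.mp (hpar w.castSucc h1)
  have h3 : (par w.castSucc).val < n+1 := by
    have : (w.castSucc : ℕ) = w.val := rfl
    have := w.isLt
    omega
  apply Fin.ext
  rw [Fin.coe_castSucc]; unfold parChild; rw [dif_pos h3]

lemma parChild_lt (hpar : ∀ i, i ≠ 0 → par i < i) (w : Fin (n+1)) (hw : w ≠ 0) : parChild par w < w := by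
  have h := congrArg Fin.val (castSucc_parChild par hpar w hw)
  have h1 : w.castSucc ≠ 0 := by exact Fin.castSucc_ne_zero_iff.mpr hw
  have h2 := Fin.lt_def.mp (hpar w.castSucc h1)
  rw [Fin.lt_def]
  simp only [Fin.coe_castSucc] at h h2
  omega

lemma castSucc_uChild (hpar : ∀ i, i ≠ 0 → par i < i) : (uChild par).castSucc = par (Fin.last (n+1)) := by
  have h1 : (Fin.last (n+1) : Fin (n+2)) ≠ 0 := by simp [Fin.ext_iff]
  have h2 := Fin.lt_def.mp (hpar _ h1)
  have h3 : (par (Fin.last (n+1))).val < n+1 := by simpa using h2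
  apply Fin.ext
  rw [Fin.coe_castSucc]; unfold uChild; rw [dif_pos h3]

lemma notmem_last_map (S : Finset (Fin (n+1))) : Fin.last (n+1) ∉ S.map Fin.castSuccEmb := by
  simp only [Finset.mem_map]
  rintro ⟨a, -, ha⟩
  exact absurd ha (ne_of_lt (Fin.castSucc_lt_last a))

lemma EB (hpar : ∀ i, i ≠ 0 → par i < i) (S : Finset (Fin (n+1))) :
    Ecut par (S.map Fin.castSuccEmb) = Ecut (parChild par) S + (if uChild par ∈ S then 1 else 0) := by
  unfold Ecut
  rw [Fin.sum_univ_castSucc]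
  congr 1
  · apply Finset.sum_congr rfl
    intro w _
    by_cases hw : w = 0
    · subst hw
      rw [if_neg, if_neg]
      · simp
      · rintro ⟨h, -⟩
        exact h rfl
    · have hcs : w.castSucc ≠ 0 := by exact Fin.castSucc_ne_zero_iff.mpr hw
      have hmem : w.castSucc ∈ S.map Fin.castSuccEmb ↔ w ∈ S := Finset.mem_map' _
      have hmem2 : par w.castSucc ∈ S.map Fin.castSuccEmb ↔ parChild par w ∈ S := by
        rw [← castSucc_parChild par hpar w hw]
        exact Finset.mem_map' _
      refine if_congr ?_ rfl rfl
      constructor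
      · rintro ⟨-, h⟩
        exact ⟨hw, fun hc => h ((hmem.trans hc).trans hmem2.symm)⟩
      · rintro ⟨-, h⟩
        exact ⟨hcs, fun hc => h ((hmem.symm.trans hc).trans hmem2)⟩
  · have hl0 : (Fin.last (n+1) : Fin (n+2)) ≠ 0 := by simp [Fin.ext_iff]
    have hl : Fin.last (n+1) ∉ S.map Fin.castSuccEmb := notmem_last_map S
    have hmem2 : par (Fin.last (n+1)) ∈ S.map Fin.castSuccEmb ↔ uChild par ∈ S := by
      rw [← castSucc_uChild par hpar]
      exact Finset.mem_map' _
    by_cases hu : uChild par ∈ S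
    · rw [if_pos, if_pos hu]
      exact ⟨hl0, fun hc => hl (hc.mpr (hmem2.mpr hu))⟩
    · rw [if_neg, if_neg hu]
      rintro ⟨-, h⟩
      exact h (iff_of_false hl (fun hc => hu (hmem2.mp hc)))

lemma ED (hpar : ∀ i, i ≠ 0 → par i < i) (S : Finset (Fin (n+1))) :
    Ecut par (insert (Fin.last (n+1)) (S.map Fin.castSuccEmb))
      = Ecut (parChild par) S + (if uChild par ∈ S then 0 else 1) := by
  unfold Ecut
  rw [Fin.sum_univ_castSucc]
  congr 1
  · apply Finset.sum_congr rfl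
    intro w _
    by_cases hw : w = 0
    · subst hw
      rw [if_neg, if_neg]
      · simp
      · rintro ⟨h, -⟩
        exact h rfl
    · have hcs : w.castSucc ≠ 0 := by exact Fin.castSucc_ne_zero_iff.mpr hw
      have hmem : w.castSucc ∈ insert (Fin.last (n+1)) (S.map Fin.castSuccEmb) ↔ w ∈ S := by
        rw [Finset.mem_insert]
        constructor
        · rintro (h|h)
          · exact absurd h (ne_of_lt (Fin.castSucc_lt_last w))
          · exact (Finset.mem_map' _).mp h
        · intro h; exact Or.inr ((Finset.mem_map' _).mpr h)
      have hcp : par w.castSucc = (parChild par w).castSucc := (castSucc_parChild par hpar w hw).symm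
      have hmem2 : par w.castSucc ∈ insert (Fin.last (n+1)) (S.map Fin.castSuccEmb) ↔ parChild par w ∈ S := by
        rw [hcp, Finset.mem_insert]
        constructor
        · rintro (h|h)
          · exact absurd h (ne_of_lt (Fin.castSucc_lt_last _))
          · exact (Finset.mem_map' _).mp h
        · intro h; exact Or.inr ((Finset.mem_map' _).mpr h)
      refine if_congr ?_ rfl rfl
      constructor
      · rintro ⟨-, h⟩
        exact ⟨hw, fun hc => h ((hmem.trans hc).trans hmem2.symm)⟩
      · rintro ⟨-, h⟩
        exact ⟨hcs, fun hc => h ((hmem.symm.trans hc).trans hmem2)⟩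
  · have hl0 : (Fin.last (n+1) : Fin (n+2)) ≠ 0 := by simp [Fin.ext_iff]
    have hl : Fin.last (n+1) ∈ insert (Fin.last (n+1)) (S.map Fin.castSuccEmb) := Finset.mem_insert_self _ _
    have hmem2 : par (Fin.last (n+1)) ∈ insert (Fin.last (n+1)) (S.map Fin.castSuccEmb) ↔ uChild par ∈ S := by
      rw [← castSucc_uChild par hpar, Finset.mem_insert]
      constructor
      · rintro (h|h)
        · exact absurd h (ne_of_lt (Fin.castSucc_lt_last _))
        · exact (Finset.mem_map' _).mp h
      · intro h; exact Or.inr ((Finset.mem_map' _).mpr h)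
    by_cases hu : uChild par ∈ S
    · rw [if_neg, if_pos hu]
      rintro ⟨-, h⟩
      exact h (iff_of_true hl (hmem2.mpr hu))
    · rw [if_pos, if_neg hu]
      exact ⟨hl0, fun hc => hu (hmem2.mp (hc.mp hl))⟩

end child

theorem succAbove_val' {n:ℕ} (k : Fin (n+1)) (x : Fin n) :
    ((k.succAbove x : Fin (n+1)) : ℕ) = if (x:ℕ) < (k:ℕ) then (x:ℕ) else (x:ℕ)+1 := by
  rcases lt_or_ge (x:ℕ) (k:ℕ) with h|h
  · rw [Fin.succAbove_of_castSucc_lt _ _ (by simpa [Fin.lt_def] using h)]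
    simp [h]
  · rw [Fin.succAbove_of_le_castSucc _ _ (by simpa [Fin.le_def] using h)]
    simp [Fin.val_succ, Nat.not_lt.mpr h]

/-- insert the last vertex at position `k` in the ordering `q'`. -/
noncomputable def Phi {n : ℕ} (q' : Equiv.Perm (Fin (n+1))) (k : Fin (n+2)) : Equiv.Perm (Fin (n+2)) :=
  finSuccEquivLast.trans ((q'.optionCongr).trans (finSuccEquiv' k).symm)

lemma Phi_last {n : ℕ} (q' : Equiv.Perm (Fin (n+1))) (k : Fin (n+2)) :
    Phi q' k (Fin.last (n+1)) = k := by
  simp [Phi, finSuccEquivLast_last, finSuccEquiv'_symm_none]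

lemma Phi_castSucc {n : ℕ} (q' : Equiv.Perm (Fin (n+1))) (k : Fin (n+2)) (v : Fin (n+1)) :
    Phi q' k v.castSucc = k.succAbove (q' v) := by
  simp [Phi, finSuccEquivLast_castSucc, finSuccEquiv'_symm_some]

lemma Phi_bijective {n : ℕ} :
    Function.Bijective (fun x : Equiv.Perm (Fin (n+1)) × Fin (n+2) => Phi x.1 x.2) := by
  rw [Fintype.bijective_iff_injective_and_card]
  constructor
  · rintro ⟨q1, k1⟩ ⟨q2, k2⟩ h
    simp only at h
    have hk : k1 = k2 := by
      rw [← Phi_last q1 k1, ← Phi_last q2 k2, h]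
    subst hk
    have hq : q1 = q2 := by
      apply Equiv.ext
      intro v
      apply Fin.succAbove_right_injective (p := k1)
      rw [← Phi_castSucc q1 k1 v, ← Phi_castSucc q2 k1 v, h]
    subst hq
    rfl
  · simp only [Fintype.card_prod, Fintype.card_perm, Fintype.card_fin, Nat.factorial_succ]
    ring

lemma mem_map_castSucc {n : ℕ} (v : Fin n) (S : Finset (Fin n)) :
    v.castSucc ∈ S.map Fin.castSuccEmb ↔ v ∈ S := Finset.mem_map' _

lemma SB {n : ℕ} (q' : Equiv.Perm (Fin (n+1))) (k : Fin (n+2)) (j : ℕ) (hj : j ≤ k.val) :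
    (univ.filter (fun v : Fin (n+2) => ((Phi q' k v : Fin (n+2)) : ℕ) < j))
      = (univ.filter (fun v : Fin (n+1) => ((q' v : Fin (n+1)) : ℕ) < j)).map Fin.castSuccEmb := by
  ext w
  induction w using Fin.lastCases with
  | last =>
    simp only [Finset.mem_filter, Finset.mem_univ, true_and, Phi_last]
    constructor
    · intro h; omega
    · intro h; exact absurd h (notmem_last_map _)
  | cast v =>
    simp only [Finset.mem_filter, Finset.mem_univ, true_and, Phi_castSucc]
    rw [mem_map_castSucc, Finset.mem_filter, succAbove_val']
    simp only [Finset.mem_univ, true_and]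
    constructor
    · intro h; split at h <;> omega
    · intro h; split <;> omega

lemma SD {n : ℕ} (q' : Equiv.Perm (Fin (n+1))) (k : Fin (n+2)) (j : ℕ) (hj : k.val < j) :
    (univ.filter (fun v : Fin (n+2) => ((Phi q' k v : Fin (n+2)) : ℕ) < j))
      = insert (Fin.last (n+1))
          ((univ.filter (fun v : Fin (n+1) => ((q' v : Fin (n+1)) : ℕ) < j - 1)).map Fin.castSuccEmb) := by
  ext w
  induction w using Fin.lastCases with
  | last =>
    simp only [Finset.mem_filter, Finset.mem_univ, true_and, Phi_last]
    exact iff_of_true hj (Finset.mem_insert_self _ _)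
  | cast v =>
    have hne : v.castSucc ≠ Fin.last (n+1) := ne_of_lt (Fin.castSucc_lt_last v)
    simp only [Finset.mem_filter, Finset.mem_univ, true_and, Phi_castSucc, Finset.mem_insert]
    rw [succAbove_val', mem_map_castSucc, Finset.mem_filter]
    simp only [Finset.mem_univ, true_and]
    constructor
    · intro h
      right
      have hk := k.isLt
      split at h <;> omega
    · rintro (h|h)
      · exact absurd h hne
      · split <;> omega


theorem telescope (n c : ℕ) (hn : 1 ≤ n) (hc1 : 1 ≤ c) (hcn : c ≤ n)
    (a : ℕ → ℝ) (ha : ∀ j, 1 ≤ j → j < n → 1 ≤ a j) (ha0 : a 0 = 0) (han : a n = 0) :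
    ∑ k ∈ range (n+1),
      ((∏ j ∈ Ioc 0 k, 1/(a j + if c ≤ j then 1 else 0)) *
       (∏ j ∈ Ico k n, 1/(a j + if j < c then 1 else 0)))
    = 2 * ∏ j ∈ Ico 1 n, 1/(a j) := by
  set b : ℕ → ℝ := fun j => a j + if c ≤ j then 1 else 0 with hb_def
  set d : ℕ → ℝ := fun j => a j + if j < c then 1 else 0 with hd_def
  have hbn : b n = 1 := by simp [hb_def, han, hcn]
  have hd0 : d 0 = 1 := by simp only [hd_def, ha0]; rw [if_pos (by omega)]; norm_num
  have hbpos : ∀ j, 1 ≤ j → j ≤ n → 0 < b j := by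
    intro j h1 h2
    rcases eq_or_lt_of_le h2 with rfl|h2
    · rw [hbn]; norm_num
    · have := ha j h1 h2
      simp only [hb_def]
      split <;> nlinarith
  have hdpos : ∀ j, j < n → 0 < d j := by
    intro j hj
    rcases Nat.eq_zero_or_pos j with rfl|h1
    · rw [hd0]; norm_num
    · have := ha j h1 hj
      simp only [hd_def]
      split <;> nlinarith
  set P : ℕ → ℝ := fun k => (∏ j ∈ Ioc 0 k, 1 / b j) * (∏ j ∈ Ico (k+1) n, 1 / d j) with hP_def
  set T : ℕ → ℝ := fun k => (∏ j ∈ Ioc 0 k, 1 / b j) * (∏ j ∈ Ico k n, 1 / d j) with hT_def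
  have hTd : ∀ k, k < n → T k = P k * (1 / d k) := by
    intro k hk
    simp only [hT_def, hP_def, prod_eq_prod_Ico_succ_bot hk (fun j => 1 / d j)]
    ring
  have hTb : ∀ k, k + 1 ≤ n → T (k+1) = P k * (1 / b (k+1)) := by
    intro k hk
    simp only [hT_def, hP_def, prod_Ioc_succ_top (Nat.zero_le k) (fun j => 1 / b j)]
    ring
  have key : ∀ k, 1 ≤ k → k < n → T k = if k < c then P k - P (k-1) else P (k-1) - P k := by
    intro k h1 h2
    have hdk : d k ≠ 0 := ne_of_gt (hdpos k h2)
    have hbk : b k ≠ 0 := ne_of_gt (hbpos k h1 (le_of_lt h2))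
    have hPk : P k = T k * d k := by
      rw [hTd k h2]; field_simp
    have hPk1 : P (k-1) = T k * b k := by
      obtain ⟨k', rfl⟩ := Nat.exists_eq_succ_of_ne_zero (by omega : k ≠ 0)
      rw [Nat.succ_sub_one]
      rw [hTb k' (by omega)] 
      field_simp
    have hdb : d k - b k = if k < c then 1 else -1 := by
      simp only [hb_def, hd_def]
      rcases lt_or_ge k c with h|h
      · simp [h, not_le.mpr h]
      · simp [h, not_lt.mpr h]
    rcases lt_or_ge k c with h|h
    · rw [if_pos h] at hdb ⊢
      rw [hPk, hPk1, show T k * d k - T k * b k = T k * (d k - b k) by ring, hdb]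
      ring
    · rw [if_neg (not_lt.mpr h)] at hdb ⊢
      rw [hPk, hPk1, show T k * b k - T k * d k = -(T k * (d k - b k)) by ring, hdb]
      ring
  have hT0 : T 0 = P 0 := by
    simp only [hT_def, hP_def, Ioc_self, prod_empty, one_mul,
      prod_eq_prod_Ico_succ_bot (show 0 < n from hn) (fun j => 1 / d j), hd0]
    norm_num
  have hTn : T n = P (n-1) := by
    obtain ⟨n', rfl⟩ := Nat.exists_eq_succ_of_ne_zero (by omega : n ≠ 0)
    rw [Nat.succ_sub_one]
    show (∏ j ∈ Ioc 0 (n'+1), 1 / b j) * (∏ j ∈ Ico (n'+1) (n'+1), 1 / d j)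
      = (∏ j ∈ Ioc 0 n', 1 / b j) * (∏ j ∈ Ico (n'+1) (n'+1), 1 / d j)
    rw [prod_Ioc_succ_top (Nat.zero_le n') (fun j => 1 / b j), hbn]
    ring
  have hgoal : (∑ k ∈ range (n+1),
      ((∏ j ∈ Ioc 0 k, 1/(b j)) * (∏ j ∈ Ico k n, 1/(d j)))) = ∑ k ∈ range (n+1), T k := rfl
  rw [hgoal, Finset.sum_range_succ]
  have hsplit : ∑ k ∈ range n, T k = T 0 + ∑ k ∈ Ico 1 n, T k := by
    rw [Finset.range_eq_Ico, Finset.sum_eq_sum_Ico_succ_bot (show 0 < n from hn)]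
  rw [hsplit, hT0, hTn]
  have hIco : (Ico 1 n : Finset ℕ) = Ico 1 c ∪ Ico c n := (Finset.Ico_union_Ico_eq_Ico hc1 hcn).symm
  have hdisj : Disjoint (Ico 1 c : Finset ℕ) (Ico c n) := by
    apply Finset.Ico_disjoint_Ico_consecutive
  have h1 : ∑ k ∈ Ico 1 c, T k = P (c-1) - P 0 := by
    rw [Finset.sum_Ico_eq_sum_range]
    have hc : ∀ i ∈ range (c-1), T (1+i) = P (i+1) - P i := by
      intro i hi
      simp only [mem_range] at hi
      rw [key (1+i) (by omega) (by omega), if_pos (by omega)]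
      congr 1 <;> congr 1 <;> omega
    rw [Finset.sum_congr rfl hc, Finset.sum_range_sub (fun i => P i)]
  have h2 : ∑ k ∈ Ico c n, T k = P (c-1) - P (n-1) := by
    rw [Finset.sum_Ico_eq_sum_range]
    have hc : ∀ i ∈ range (n-c), T (c+i) = P (c-1+i) - P (c-1+(i+1)) := by
      intro i hi
      simp only [mem_range] at hi
      rw [key (c+i) (by omega) (by omega), if_neg (by omega)]
      congr 1 <;> congr 1 <;> omega
    rw [Finset.sum_congr rfl hc, Finset.sum_range_sub' (fun i => P (c-1+i))]
    congr 2 <;> omega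
  have hsum2 : ∑ k ∈ Ico 1 n, T k = (P (c-1) - P 0) + (P (c-1) - P (n-1)) := by
    rw [hIco, Finset.sum_union hdisj, h1, h2]
  rw [hsum2]
  have hPc : P (c-1) = ∏ j ∈ Ico 1 n, 1 / a j := by
    have hc1' : c - 1 + 1 = c := by omega
    show (∏ j ∈ Ioc 0 (c-1), 1 / b j) * (∏ j ∈ Ico (c-1+1) n, 1 / d j) = _
    rw [hc1']
    rw [← Finset.prod_Ico_consecutive (fun j => 1/a j) hc1 hcn]
    congr 1
    · rw [show Ioc 0 (c-1) = Ico 1 c by ext x; simp only [mem_Ioc, mem_Ico]; omega]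
      apply Finset.prod_congr rfl
      intro j hj
      simp only [mem_Ico] at hj
      simp [hb_def, Nat.not_le.mpr hj.2]
    · apply Finset.prod_congr rfl
      intro j hj
      simp only [mem_Ico] at hj
      simp [hd_def, Nat.not_lt.mpr hj.1]
  rw [← hPc]
  ring

theorem tree_sum : ∀ (n : ℕ) (par : Fin (n+1) → Fin (n+1)), (∀ i, i ≠ 0 → par i < i) →
    (∑ q : Equiv.Perm (Fin (n+1)), ∏ j ∈ Icc 1 n,
      (1:ℝ) / (Ecut par (univ.filter (fun v => ((q v : Fin (n+1)) : ℕ) < j)) : ℝ)) = 2^n := by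
  intro n
  induction n with
  | zero =>
    intro par hpar
    rw [Finset.Icc_eq_empty (by omega)]
    simp
  | succ n IH =>
    intro par hpar
    have h1 : (∑ q : Equiv.Perm (Fin (n+2)), ∏ j ∈ Icc 1 (n+1),
          (1:ℝ) / (Ecut par (univ.filter (fun v => ((q v : Fin (n+2)) : ℕ) < j)) : ℝ))
        = ∑ x : Equiv.Perm (Fin (n+1)) × Fin (n+2), ∏ j ∈ Icc 1 (n+1),
          (1:ℝ) / (Ecut par (univ.filter (fun v => ((Phi x.1 x.2 v : Fin (n+2)) : ℕ) < j)) : ℝ) :=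
      (Fintype.sum_bijective _ Phi_bijective _ _ (fun x => rfl)).symm
    rw [h1, Fintype.sum_prod_type]
    have key : ∀ q' : Equiv.Perm (Fin (n+1)),
        (∑ k : Fin (n+2), ∏ j ∈ Icc 1 (n+1),
          (1:ℝ) / (Ecut par (univ.filter (fun v => ((Phi q' k v : Fin (n+2)) : ℕ) < j)) : ℝ))
        = 2 * ∏ j ∈ Icc 1 n,
            (1:ℝ) / (Ecut (parChild par) (univ.filter (fun v => ((q' v : Fin (n+1)) : ℕ) < j)) : ℝ) := by
      intro q'
      set c : ℕ := (q' (uChild par)).val + 1 with hc_def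
      set a : ℕ → ℝ := fun j =>
        ((Ecut (parChild par) (univ.filter (fun v : Fin (n+1) => ((q' v : Fin (n+1)) : ℕ) < j)) : ℕ) : ℝ)
        with ha_def
      have hu : ∀ j : ℕ,
          (uChild par ∈ univ.filter (fun v : Fin (n+1) => ((q' v : Fin (n+1)) : ℕ) < j)) ↔ c ≤ j := by
        intro j
        rw [Finset.mem_filter]
        simp only [Finset.mem_univ, true_and, hc_def]
        omega
      have hterm : ∀ k : Fin (n+2),
          (∏ j ∈ Icc 1 (n+1),
            (1:ℝ) / (Ecut par (univ.filter (fun v => ((Phi q' k v : Fin (n+2)) : ℕ) < j)) : ℝ))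
          = (∏ j ∈ Ioc 0 (k.val), 1/(a j + if c ≤ j then 1 else 0)) *
            (∏ j ∈ Ico (k.val) (n+1), 1/(a j + if j < c then 1 else 0)) := by
        intro k
        rw [show (Icc 1 (n+1) : Finset ℕ) = Ioc 0 (n+1) by rw [← Finset.Icc_add_one_left_eq_Ioc, zero_add],
          ← Finset.prod_Ioc_consecutive _ (Nat.zero_le k.val) (by omega : k.val ≤ n+1)]
        congr 1
        · apply Finset.prod_congr rfl
          intro j hj
          simp only [Finset.mem_Ioc] at hj
          rw [SB q' k j hj.2, EB par hpar]
          by_cases hcj : c ≤ j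
          · rw [if_pos ((hu j).mpr hcj), if_pos hcj]
            push_cast
            ring
          · rw [if_neg (fun hmem => hcj ((hu j).mp hmem)), if_neg hcj]
            push_cast
            ring
        · rw [show (Ioc (k.val) (n+1) : Finset ℕ) = (Ico (k.val) (n+1)).image (· + 1) by
            rw [Finset.image_add_right_Ico]
            ext x
            simp only [Finset.mem_Ioc, Finset.mem_Ico]
            omega]
          rw [Finset.prod_image (fun x _ y _ h => by omega)]
          apply Finset.prod_congr rfl
          intro j hj
          simp only [Finset.mem_Ico] at hj
          show (1:ℝ) / (Ecut par (univ.filter (fun v => ((Phi q' k v : Fin (n+2)) : ℕ) < (j+1))) : ℝ) = _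
          rw [SD q' k (j+1) (by omega), ED par hpar]
          simp only [Nat.add_sub_cancel]
          by_cases hcj : j < c
          · rw [if_neg (fun hmem => by have := (hu j).mp hmem; omega), if_pos hcj]
            push_cast
            ring
          · rw [if_pos ((hu j).mpr (by omega)), if_neg hcj]
            push_cast
            ring
      rw [Finset.sum_congr rfl (fun k _ => hterm k)]
      rw [Fin.sum_univ_eq_sum_range (fun k =>
        (∏ j ∈ Ioc 0 k, 1/(a j + if c ≤ j then 1 else 0)) *
        (∏ j ∈ Ico k (n+1), 1/(a j + if j < c then 1 else 0))) (n+2)]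
      have hc1 : 1 ≤ c := by omega
      have hcn : c ≤ n+1 := by
        have := (q' (uChild par)).isLt
        omega
      have ha : ∀ j, 1 ≤ j → j < n+1 → 1 ≤ a j := by
        intro j h1j h2j
        have hne : (univ.filter (fun v : Fin (n+1) => ((q' v : Fin (n+1)) : ℕ) < j)).Nonempty := by
          refine ⟨q'.symm 0, Finset.mem_filter.mpr ⟨mem_univ _, ?_⟩⟩
          rw [Equiv.apply_symm_apply]
          exact h1j
        have hproper : (univ.filter (fun v : Fin (n+1) => ((q' v : Fin (n+1)) : ℕ) < j)) ≠ univ := by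
          intro h
          have hmem : q'.symm (Fin.last n) ∈ univ.filter (fun v : Fin (n+1) => ((q' v : Fin (n+1)) : ℕ) < j) := by
            rw [h]; exact mem_univ _
          have := (Finset.mem_filter.mp hmem).2
          rw [Equiv.apply_symm_apply] at this
          simp only [Fin.val_last] at this
          omega
        have := Ecut_pos (parChild par) (fun w hw => parChild_lt par hpar w hw) _ hne hproper
        simp only [ha_def]
        exact_mod_cast this
      have ha0 : a 0 = 0 := by
        have : (univ.filter (fun v : Fin (n+1) => ((q' v : Fin (n+1)) : ℕ) < 0)) = ∅ := by
          apply Finset.filter_eq_empty_iff.mpr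
          intro v _
          omega
        simp only [ha_def, this, Ecut_empty, Nat.cast_zero]
      have han : a (n+1) = 0 := by
        have : (univ.filter (fun v : Fin (n+1) => ((q' v : Fin (n+1)) : ℕ) < n+1)) = univ := by
          apply Finset.filter_true_of_mem
          intro v _
          exact (q' v).isLt
        simp only [ha_def, this, Ecut_univ, Nat.cast_zero]
      rw [telescope (n+1) c (by omega) hc1 hcn a (by simpa using ha) ha0 han]
      rw [Finset.Ico_add_one_right_eq_Icc]
    rw [Finset.sum_congr rfl (fun q' _ => key q'), ← Finset.mul_sum,
      IH (parChild par) (fun w hw => parChild_lt par hpar w hw)]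
    ring


lemma exists_tree_order {n : ℕ} (G : SimpleGraph (Fin (n+1))) (hG : G.Connected) :
    ∃ (σ : Equiv.Perm (Fin (n+1))) (par : Fin (n+1) → Fin (n+1)),
      ∀ i, i ≠ 0 → par i < i ∧ G.Adj (σ i) (σ (par i)) := by
  -- GOOD l: every later entry is adjacent to an earlier one
  let GOOD : List (Fin (n+1)) → Prop := fun l =>
    ∀ (i : ℕ) (hi : i < l.length), i ≠ 0 →
      ∃ (j : ℕ) (hj : j < l.length), j < i ∧ G.Adj (l.get ⟨i, hi⟩) (l.get ⟨j, hj⟩)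
  have key : ∀ m : ℕ, ∀ l : List (Fin (n+1)), l.Nodup → l ≠ [] → GOOD l → l.length + m = n+1 →
      ∃ L : List (Fin (n+1)), L.Nodup ∧ L.length = n+1 ∧ GOOD L := by
    intro m
    induction m with
    | zero =>
      intro l h1 _ h3 h4
      exact ⟨l, h1, by omega, h3⟩
    | succ m IH =>
      intro l h1 h2 h3 h4
      obtain ⟨x, hx⟩ : ∃ x : Fin (n+1), x ∉ l := by
        by_contra hc
        push_neg at hc
        have hsub : (univ : Finset (Fin (n+1))) ⊆ l.toFinset := by
          intro y _
          simpa using hc y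
        have := (Finset.card_le_card hsub).trans (List.toFinset_card_le l)
        simp only [Finset.card_univ, Fintype.card_fin] at this
        omega
      obtain ⟨w⟩ := hG.preconnected (l.head h2) x
      obtain ⟨d, -, hd1, hd2⟩ := w.exists_boundary_dart {y | y ∈ l} (List.head_mem h2) hx
      have hadj : G.Adj d.toProd.1 d.toProd.2 := d.adj
      have hd1' : d.toProd.1 ∈ l := hd1
      have hd2' : d.toProd.2 ∉ l := hd2
      refine IH (l ++ [d.toProd.2]) ?_ (by simp) ?_ (by simp; omega)
      · rw [List.nodup_append]
        exact ⟨h1, List.nodup_singleton _, by simpa [List.Disjoint] using fun a ha hb => hd2' (by simpa using hb ▸ ha)⟩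
      · intro i hi hi0
        have hi' : i < l.length + 1 := by simpa using hi
        rcases lt_or_eq_of_le (Nat.lt_succ_iff.mp hi') with hlt|heq
        · obtain ⟨j, hj, hji, hadj'⟩ := h3 i hlt hi0
          refine ⟨j, by simp; omega, hji, ?_⟩
          rw [show (l ++ [d.toProd.2]).get ⟨i, hi⟩ = l.get ⟨i, hlt⟩ from by rw [List.get_eq_getElem, List.get_eq_getElem]; exact List.getElem_append_left hlt,
            show (l ++ [d.toProd.2]).get ⟨j, by simp; omega⟩ = l.get ⟨j, hj⟩ from by rw [List.get_eq_getElem, List.get_eq_getElem]; exact List.getElem_append_left hj]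
          exact hadj'
        · subst heq
          have hjlt : List.idxOf d.toProd.1 l < l.length := List.idxOf_lt_length_iff.mpr hd1'
          refine ⟨List.idxOf d.toProd.1 l, by simp; omega, by omega, ?_⟩
          rw [show (l ++ [d.toProd.2]).get ⟨l.length, hi⟩ = d.toProd.2 by
              rw [List.get_eq_getElem]; exact List.getElem_concat_length rfl _,
            show (l ++ [d.toProd.2]).get ⟨List.idxOf d.toProd.1 l, by simp; omega⟩
              = l.get ⟨List.idxOf d.toProd.1 l, hjlt⟩ from by rw [List.get_eq_getElem, List.get_eq_getElem]; exact List.getElem_append_left hjlt,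
            List.idxOf_get hjlt]
          exact hadj.symm
  obtain ⟨L, hnod, hlen, hgood⟩ := key n [(0 : Fin (n+1))] (List.nodup_singleton _) (by simp)
    (by intro i hi hi0; simp at hi; omega) (by simp; omega)
  have hgf : ∀ i : Fin (n+1), i.val < L.length := by intro i; rw [hlen]; exact i.isLt
  set g : Fin (n+1) → Fin (n+1) := fun i => L.get ⟨i.val, hgf i⟩ with hg_def
  have hginj : Function.Injective g := by
    intro i j h
    have := (hnod.get_inj_iff).mp h
    have := congrArg Fin.val this
    exact Fin.ext this
  have hgbij := Finite.injective_iff_bijective.mp hginj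
  set σ : Equiv.Perm (Fin (n+1)) := Equiv.ofBijective g hgbij with hσ_def
  have hgood' : ∀ i : Fin (n+1), i ≠ 0 →
      ∃ (j : ℕ) (hj : j < L.length), j < i.val ∧ G.Adj (L.get ⟨i.val, hgf i⟩) (L.get ⟨j, hj⟩) := by
    intro i hi
    apply hgood
    exact Fin.val_ne_zero_iff.mpr hi
  set par : Fin (n+1) → Fin (n+1) := fun i =>
    if h : i = 0 then 0 else ⟨(hgood' i h).choose, by
      obtain ⟨hj, hji, -⟩ := (hgood' i h).choose_spec
      exact lt_trans hji i.isLt⟩ with hpar_def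
  refine ⟨σ, par, ?_⟩
  intro i hi
  obtain ⟨hj, hji, hadj⟩ := (hgood' i hi).choose_spec
  constructor
  · simp only [hpar_def, dif_neg hi]
    exact hji
  · have h1 : σ i = L.get ⟨i.val, hgf i⟩ := rfl
    have h2 : σ (par i) = L.get ⟨(hgood' i hi).choose, hj⟩ := by
      simp only [hσ_def, hpar_def, dif_neg hi, Equiv.ofBijective_apply, hg_def]
    rw [h1, h2]
    exact hadj

lemma Ecut_le_weightedCut {n : ℕ} (G : SimpleGraph (Fin (n+1))) (m : Sym2 (Fin (n+1)) → ℕ)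
    (hm : ∀ e ∈ G.edgeSet, 1 ≤ m e) (σ : Equiv.Perm (Fin (n+1))) (par : Fin (n+1) → Fin (n+1))
    (hσ : ∀ i, i ≠ 0 → par i < i ∧ G.Adj (σ i) (σ (par i))) (S : Finset (Fin (n+1))) :
    Ecut par (S.image σ.symm) ≤ weightedCut G m S := by
  set S' := S.image σ.symm with hS'
  have hmem : ∀ i, i ∈ S' ↔ σ i ∈ S := by
    intro i
    rw [hS']
    constructor
    · intro h
      obtain ⟨x, hx, hxi⟩ := Finset.mem_image.mp h
      rwa [show x = σ i by rw [← hxi, Equiv.apply_symm_apply]] at hx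
    · intro h
      exact Finset.mem_image.mpr ⟨σ i, h, Equiv.symm_apply_apply _ _⟩
  set B := univ.filter (fun i : Fin (n+1) => i ≠ 0 ∧ ¬((i ∈ S') ↔ (par i ∈ S'))) with hB
  have hcard : Ecut par S' = B.card := by
    rw [hB, Ecut, Finset.card_filter]
  set f : Fin (n+1) → Fin (n+1) × Fin (n+1) := fun i =>
    if σ i ∈ S then (σ i, σ (par i)) else (σ (par i), σ i) with hf
  have hBprop : ∀ i ∈ B, i ≠ 0 ∧ ¬((σ i ∈ S) ↔ (σ (par i) ∈ S)) := by
    intro i hi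
    obtain ⟨-, h1, h2⟩ := Finset.mem_filter.mp hi
    exact ⟨h1, fun hc => h2 (((hmem i).trans hc).trans (hmem (par i)).symm)⟩
  have hfC : ∀ i ∈ B, (f i).1 ∈ S ∧ (f i).2 ∉ S ∧ G.Adj (f i).1 (f i).2 := by
    intro i hi
    obtain ⟨h1, h2⟩ := hBprop i hi
    have hadj := (hσ i h1).2
    by_cases h : σ i ∈ S
    · rw [hf]; simp only [if_pos h]
      exact ⟨h, fun hc => h2 (iff_of_true h hc), hadj⟩
    · have hc : σ (par i) ∈ S := by
        by_contra hc
        exact h2 (iff_of_false h hc)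
      rw [hf]; simp only [if_neg h]
      exact ⟨hc, h, hadj.symm⟩
  have hinj : Set.InjOn f B := by
    intro i hi i' hi' heq
    obtain ⟨h1, -⟩ := hBprop i hi
    obtain ⟨h1', -⟩ := hBprop i' hi'
    have hp := (hσ i h1).1
    have hp' := (hσ i' h1').1
    rw [hf] at heq
    simp only at heq
    by_cases h : σ i ∈ S <;> by_cases h' : σ i' ∈ S
    · rw [if_pos h, if_pos h'] at heq
      exact σ.injective (congrArg Prod.fst heq)
    · rw [if_pos h, if_neg h'] at heq
      have e1 : i = par i' := σ.injective (congrArg Prod.fst heq)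
      have e2 : par i = i' := σ.injective (congrArg Prod.snd heq)
      rw [← e1] at hp'
      rw [e2] at hp
      exact absurd hp (lt_asymm hp')
    · rw [if_neg h, if_pos h'] at heq
      have e1 : par i = i' := σ.injective (congrArg Prod.fst heq)
      have e2 : i = par i' := σ.injective (congrArg Prod.snd heq)
      rw [← e2] at hp'
      rw [e1] at hp
      exact absurd hp (lt_asymm hp')
    · rw [if_neg h, if_neg h'] at heq
      exact σ.injective (congrArg Prod.snd heq)
  rw [weightedCut, hcard, ← Finset.card_image_of_injOn hinj, Finset.card_eq_sum_ones]
  have hsub : B.image f ⊆ (Finset.univ : Finset (Fin (n+1) × Fin (n+1))).filter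
      (fun p => p.1 ∈ S ∧ p.2 ∉ S ∧ G.Adj p.1 p.2) := by
    intro pr hpr
    obtain ⟨i, hi, rfl⟩ := Finset.mem_image.mp hpr
    exact Finset.mem_filter.mpr ⟨mem_univ _, hfC i hi⟩
  calc ∑ _pr ∈ B.image f, 1 ≤ ∑ pr ∈ B.image f, m s(pr.1, pr.2) := by
        apply Finset.sum_le_sum
        intro pr hpr
        obtain ⟨i, hi, rfl⟩ := Finset.mem_image.mp hpr
        obtain ⟨-, -, hadj⟩ := hfC i hi
        exact hm _ ((G.mem_edgeSet).mpr hadj)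
  _ ≤ _ := Finset.sum_le_sum_of_subset_of_nonneg hsub (fun _ _ _ => Nat.zero_le _)


/-- Let `G` be a connected simple graph on `Fin n` (`n ≥ 1`) with edge
multiplicities `m(e) ≥ 1`. Then
`∑_{p ∈ S_n} ∏_{j=1}^{n−1} 1/e(S_j^p) ≤ 2^(n−1)`, where `S_j^p` is the set of the first `j`
vertices in the order given by the permutation `p`. -/
theorem stmt_15 (n : ℕ) (hn : 1 ≤ n) (G : SimpleGraph (Fin n)) (hG : G.Connected)
    (m : Sym2 (Fin n) → ℕ) (hm : ∀ e ∈ G.edgeSet, 1 ≤ m e) :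
    ∑ p : Equiv.Perm (Fin n),
        ∏ j ∈ Finset.Icc 1 (n - 1),
          (1 : ℝ) /
            (weightedCut G m (Finset.univ.filter (fun v : Fin n => (p.symm v).val < j)) : ℝ)
    ≤ 2 ^ (n - 1) := by
  obtain ⟨N, rfl⟩ : ∃ N, n = N + 1 := ⟨n - 1, by omega⟩
  simp only [Nat.add_sub_cancel]
  obtain ⟨σ, par, hσ⟩ := exists_tree_order G hG
  have hpar : ∀ i, i ≠ 0 → par i < i := fun i hi => (hσ i hi).1
  have hbound : ∀ p : Equiv.Perm (Fin (N+1)),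
      (∏ j ∈ Icc 1 N, (1:ℝ) /
          (weightedCut G m (univ.filter (fun v : Fin (N+1) => (p.symm v).val < j)) : ℝ))
      ≤ ∏ j ∈ Icc 1 N, (1:ℝ) /
          (Ecut par ((univ.filter (fun v : Fin (N+1) => (p.symm v).val < j)).image σ.symm) : ℝ) := by
    intro p
    apply Finset.prod_le_prod
    · intro j _
      positivity
    · intro j hj
      simp only [Finset.mem_Icc] at hj
      have hne : ((univ.filter (fun v : Fin (N+1) => (p.symm v).val < j)).image σ.symm).Nonempty := by
        refine ⟨σ.symm (p 0), Finset.mem_image_of_mem _ (Finset.mem_filter.mpr ⟨mem_univ _, ?_⟩)⟩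
        rw [Equiv.symm_apply_apply]
        have h0 : ((0 : Fin (N+1)) : ℕ) = 0 := rfl
        omega
      have hproper : ((univ.filter (fun v : Fin (N+1) => (p.symm v).val < j)).image σ.symm) ≠ univ := by
        intro hc
        have hclt := Finset.card_image_le
          (s := univ.filter (fun v : Fin (N+1) => (p.symm v).val < j)) (f := σ.symm)
        rw [hc] at hclt
        have hmemx : p (Fin.last N) ∉ (univ.filter (fun v : Fin (N+1) => (p.symm v).val < j)) := by
          intro hmem
          have := (Finset.mem_filter.mp hmem).2
          rw [Equiv.symm_apply_apply] at this
          simp only [Fin.val_last] at this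
          omega
        have hle : (univ.filter (fun v : Fin (N+1) => (p.symm v).val < j)).card
            < (univ : Finset (Fin (N+1))).card :=
          Finset.card_lt_card ((Finset.ssubset_iff_of_subset (Finset.subset_univ _)).mpr
            ⟨p (Fin.last N), mem_univ _, hmemx⟩)
        omega
      have h1 : 1 ≤ Ecut par ((univ.filter (fun v : Fin (N+1) => (p.symm v).val < j)).image σ.symm) :=
        Ecut_pos par hpar _ hne hproper
      have h2 := Ecut_le_weightedCut G m hm σ par hσ
        (univ.filter (fun v : Fin (N+1) => (p.symm v).val < j))
      apply one_div_le_one_div_of_le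
      · exact_mod_cast h1
      · exact_mod_cast h2
  have hset : ∀ (p : Equiv.Perm (Fin (N+1))) (j : ℕ),
      ((univ.filter (fun v : Fin (N+1) => (p.symm v).val < j)).image σ.symm)
      = univ.filter (fun w : Fin (N+1) => (((σ.trans p.symm) w : Fin (N+1)) : ℕ) < j) := by
    intro p j
    ext w
    simp only [Finset.mem_image, Finset.mem_filter, Finset.mem_univ, true_and]
    simp only [Equiv.trans_apply]
    constructor
    · rintro ⟨v, hv, rfl⟩
      rwa [Equiv.apply_symm_apply]
    · intro h
      exact ⟨σ w, h, Equiv.symm_apply_apply _ _⟩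
  have hreindex : (∑ p : Equiv.Perm (Fin (N+1)), ∏ j ∈ Icc 1 N,
      (1:ℝ) / (Ecut par ((univ.filter (fun v : Fin (N+1) => (p.symm v).val < j)).image σ.symm) : ℝ))
      = ∑ q : Equiv.Perm (Fin (N+1)), ∏ j ∈ Icc 1 N,
        (1:ℝ) / (Ecut par (univ.filter (fun v : Fin (N+1) => ((q v : Fin (N+1)) : ℕ) < j)) : ℝ) := by
    have hbij : Function.Bijective (fun p : Equiv.Perm (Fin (N+1)) => σ.trans p.symm) := by
      rw [Fintype.bijective_iff_injective_and_card]
      refine ⟨?_, rfl⟩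
      intro p p' h
      simp only at h
      have hsymm : p.symm = p'.symm := by
        apply Equiv.ext
        intro x
        have h2 := congrFun (congrArg (fun (e : Equiv (Fin (N+1)) (Fin (N+1))) =>
          (e : Fin (N+1) → Fin (N+1))) h) (σ.symm x)
        simpa [Equiv.trans_apply, Equiv.apply_symm_apply] using h2
      have := congrArg Equiv.symm hsymm
      simpa using this
    exact Fintype.sum_bijective _ hbij _ _
      (fun p => Finset.prod_congr rfl (fun j _ => by rw [hset p j]))
  calc (∑ p : Equiv.Perm (Fin (N+1)), ∏ j ∈ Icc 1 N, (1:ℝ) /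
          (weightedCut G m (univ.filter (fun v : Fin (N+1) => (p.symm v).val < j)) : ℝ))
      ≤ ∑ p : Equiv.Perm (Fin (N+1)), ∏ j ∈ Icc 1 N, (1:ℝ) /
          (Ecut par ((univ.filter (fun v : Fin (N+1) => (p.symm v).val < j)).image σ.symm) : ℝ) :=
        Finset.sum_le_sum (fun p _ => hbound p)
    _ = ∑ q : Equiv.Perm (Fin (N+1)), ∏ j ∈ Icc 1 N,
          (1:ℝ) / (Ecut par (univ.filter (fun v : Fin (N+1) => ((q v : Fin (N+1)) : ℕ) < j)) : ℝ) :=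
        hreindex
    _ ≤ 2 ^ N := le_of_eq (tree_sum N par hpar)
end

section
/- Let k ≥ 1 and let E_0, E_1, …, E_{k−1} be real numbers with E_0 = 0 and E_j > 0 for 1 ≤ j ≤ k−1. Then ∑_{l=0}^{k−1} (∏_{j=1}^{l} 1/E_j) · (∏_{j=l}^{k−1} 1/(E_j + 1)) = ∏_{j=1}^{k−1} 1/E_j (empty products being 1). -/
/-- Let `k ≥ 1` and let `E_0, …, E_{k−1}` be reals with `E_0 = 0` and
`E_j > 0` for `1 ≤ j ≤ k−1`. Then
`∑_{l=0}^{k−1} (∏_{j=1}^{l} 1/E_j) · (∏_{j=l}^{k−1} 1/(E_j + 1)) = ∏_{j=1}^{k−1} 1/E_j`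
(empty products being 1). -/
theorem stmt_16 (k : ℕ) (hk : 1 ≤ k) (E : ℕ → ℝ) (h0 : E 0 = 0)
    (hpos : ∀ j : ℕ, 1 ≤ j → j ≤ k - 1 → 0 < E j) :
    ∑ l ∈ Finset.range k,
        (∏ j ∈ Finset.Icc 1 l, 1 / E j) * (∏ j ∈ Finset.Icc l (k - 1), 1 / (E j + 1))
    = ∏ j ∈ Finset.Icc 1 (k - 1), 1 / E j := by
  induction k, hk using Nat.le_induction with
  | base => simp [h0]
  | succ n hn ih =>
    have hpos' : ∀ j : ℕ, 1 ≤ j → j ≤ n - 1 → 0 < E j := fun j h1 h2 =>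
      hpos j h1 (by omega)
    have hEn : 0 < E n := hpos n hn (by omega)
    have hEn1 : (0:ℝ) < E n + 1 := by linarith
    have hsub : n + 1 - 1 = n := rfl
    rw [hsub, Finset.sum_range_succ]
    have hn1 : n - 1 + 1 = n := by omega
    have step : ∀ l ∈ Finset.range n,
        (∏ j ∈ Finset.Icc 1 l, 1 / E j) * (∏ j ∈ Finset.Icc l n, 1 / (E j + 1))
        = ((∏ j ∈ Finset.Icc 1 l, 1 / E j) *
            (∏ j ∈ Finset.Icc l (n - 1), 1 / (E j + 1))) * (1 / (E n + 1)) := by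
      intro l hl
      rw [Finset.mem_range] at hl
      have : ∏ j ∈ Finset.Icc l n, 1 / (E j + 1)
          = (∏ j ∈ Finset.Icc l (n - 1), 1 / (E j + 1)) * (1 / (E n + 1)) := by
        rw [← hn1, Finset.prod_Icc_succ_top (by omega)]
        simp [hn1]
      rw [this]; ring
    rw [Finset.sum_congr rfl step, ← Finset.sum_mul, ih hpos', Finset.Icc_self,
      Finset.prod_singleton]
    have hprod : ∏ j ∈ Finset.Icc 1 n, 1 / E j
        = (∏ j ∈ Finset.Icc 1 (n - 1), 1 / E j) * (1 / E n) := by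
      rw [← hn1, Finset.prod_Icc_succ_top (by omega)]
      simp [hn1]
    have hP : 0 < ∏ j ∈ Finset.Icc 1 (n - 1), E j :=
      Finset.prod_pos fun j hj => hpos' j (Finset.mem_Icc.mp hj).1 (Finset.mem_Icc.mp hj).2
    have hPne : (∏ j ∈ Finset.Icc 1 (n - 1), E j) ≠ 0 := ne_of_gt hP
    have hEnne : E n ≠ 0 := ne_of_gt hEn
    have hEn1ne : E n + 1 ≠ 0 := ne_of_gt hEn1
    rw [hprod]
    field_simp
end

section
/- Let N ≥ 1 and consider H(s) = (1−s)H_0 + s·H_P on ℝ^({0,1}^N), where H_0 has matrix entries (H_0)_{x,y} = −1 if the bit strings x and y differ in exactly one bit and 0 otherwise, and H_P is diagonal with diagonal entries E_x satisfying E_{x⁰} = 0 for one distinguished string x⁰ and E_x ≥ 1 for all x ≠ x⁰. Let Δ(s) be the difference between the second-smallest and smallest eigenvalues of the symmetric matrix H(s), counted with multiplicity. Then for every s with 2N/(2N+2) < s ≤ 1, one has Δ(s) ≥ s − 2(1−s)N; in particular Δ(s) ≥ 1/(2N+2) for s ≥ (2N+1)/(2N+2). -/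
open scoped Classical

open Matrix

/-- The adiabatic Hamiltonian `H(s) = (1−s)H_0 + s·H_P` on `ℝ^({0,1}^N)`, where
`(H_0)_{x,y} = −1` if `x` and `y` differ in exactly one bit and `0` otherwise, and
`H_P` is diagonal with diagonal entries `E_x`. -/
noncomputable def adiabaticH (N : ℕ) (E : (Fin N → Bool) → ℝ) (s : ℝ) :
    Matrix (Fin N → Bool) (Fin N → Bool) ℝ :=
  fun x y =>
    (1 - s) * (if hammingDist x y = 1 then (-1 : ℝ) else 0) +
      s * (if x = y then E x else 0)

private lemma eigen_dot {n : Type*} [Fintype n] [DecidableEq n]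
    {A : Matrix n n ℝ} (hA : A.IsHermitian) (i j : n) :
    (⇑(hA.eigenvectorBasis i)) ⬝ᵥ (⇑(hA.eigenvectorBasis j)) = if i = j then (1:ℝ) else 0 := by
  have h := hA.eigenvectorBasis.orthonormal
  rw [orthonormal_iff_ite] at h
  have h2 := h i j
  simpa [PiLp.inner_apply, RCLike.inner_apply, dotProduct, mul_comm] using h2

private lemma card_neighbors' {N : ℕ} (x : Fin N → Bool) :
    (Finset.univ.filter fun y => hammingDist x y = 1).card = N := by
  have himg : (Finset.univ.filter fun y => hammingDist x y = 1)
      = Finset.univ.image (fun i : Fin N => Function.update x i (!x i)) := by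
    ext y
    simp only [Finset.mem_filter, Finset.mem_univ, true_and, Finset.mem_image]
    constructor
    · intro hy
      obtain ⟨i, hi⟩ := Finset.card_eq_one.mp hy
      refine ⟨i, ?_⟩
      funext j
      rcases eq_or_ne j i with rfl | hj
      · have : j ∈ ({j} : Finset (Fin N)) := Finset.mem_singleton_self j
        rw [← hi] at this
        simp only [Finset.mem_filter, Finset.mem_univ, true_and] at this
        simp only [Function.update_self]
        cases hx : x j <;> cases hy' : y j <;> simp_all
      · have : j ∉ ({i} : Finset (Fin N)) := by simp [hj]
        rw [← hi] at this
        simp only [Finset.mem_filter, Finset.mem_univ, true_and, not_not] at this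
        simp [Function.update_of_ne hj, this]
    · rintro ⟨i, rfl⟩
      have : (Finset.univ.filter fun j => x j ≠ Function.update x i (!x i) j) = {i} := by
        ext j
        simp only [Finset.mem_filter, Finset.mem_univ, true_and, Finset.mem_singleton]
        rcases eq_or_ne j i with rfl | hj
        · simp [Function.update_self]
        · simp [Function.update_of_ne hj, hj]
      simp [hammingDist, this]
  rw [himg, Finset.card_image_of_injective _ ?_, Finset.card_univ, Fintype.card_fin]
  intro i i' h
  by_contra hne
  have := congrFun h i
  simp only [] at this
  rw [Function.update_self, Function.update_of_ne (Ne.symm ?_)] at this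
  · cases x i <;> simp_all
  · exact fun hc => hne (hc ▸ rfl)

private lemma quadA {N : ℕ} (E : (Fin N → Bool) → ℝ) {s : ℝ} (hs0 : 0 ≤ s) (hs₂ : s ≤ 1)
    (x₀ : Fin N → Bool) (hx₀ : E x₀ = 0) (hE : ∀ x, x ≠ x₀ → 1 ≤ E x)
    (v : (Fin N → Bool) → ℝ) (hv : v x₀ = 0) :
    (s - (1 - s) * N) * (v ⬝ᵥ v) ≤ v ⬝ᵥ (adiabaticH N E s *ᵥ v) := by
  have e1 : ∀ x, (adiabaticH N E s *ᵥ v) x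
      = (1 - s) * (∑ y, if hammingDist x y = 1 then -v y else 0) + s * (E x * v x) := by
    intro x
    simp only [Matrix.mulVec, dotProduct, adiabaticH, add_mul, Finset.sum_add_distrib,
      Finset.mul_sum, mul_assoc, ite_mul, zero_mul, neg_one_mul, mul_ite, mul_zero]
    congr 1
    rw [Finset.sum_ite_eq]
    simp
  have e2 : v ⬝ᵥ (adiabaticH N E s *ᵥ v)
      = (1 - s) * (∑ x, ∑ y, if hammingDist x y = 1 then -(v x * v y) else 0)
        + s * ∑ x, E x * (v x * v x) := by
    simp only [dotProduct, e1, mul_add]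
    rw [Finset.sum_add_distrib, Finset.mul_sum, Finset.mul_sum]
    congr 1
    · refine Finset.sum_congr rfl fun x _ => ?_
      rw [mul_left_comm]
      congr 1
      rw [Finset.mul_sum]
      refine Finset.sum_congr rfl fun y _ => ?_
      rcases eq_or_ne (hammingDist x y) 1 with h | h <;> simp [h]
    · refine Finset.sum_congr rfl fun x _ => ?_
      ring
  set Q := ∑ x, v x * v x with hQ
  have hQ0 : 0 ≤ Q := Finset.sum_nonneg fun x _ => mul_self_nonneg _
  have hP : Q ≤ ∑ x, E x * (v x * v x) := by
    refine Finset.sum_le_sum fun x _ => ?_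
    rcases eq_or_ne x x₀ with rfl | hx
    · simp [hv, hx₀]
    · nlinarith [hE x hx, mul_self_nonneg (v x)]
  have hcard : ∀ x : Fin N → Bool,
      (∑ y, if hammingDist x y = 1 then v x * v x else 0) = (v x * v x) * N := by
    intro x
    rw [← Finset.sum_filter, Finset.sum_const, card_neighbors', nsmul_eq_mul, mul_comm]
  have h1 : (∑ x : Fin N → Bool, ∑ y, if hammingDist x y = 1 then v x * v x else 0)
      = N * Q := by
    rw [Finset.sum_congr rfl fun x _ => hcard x, ← Finset.sum_mul, mul_comm]
  have h2 : (∑ x : Fin N → Bool, ∑ y, if hammingDist x y = 1 then v y * v y else 0)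
      = N * Q := by
    rw [Finset.sum_comm]
    refine Eq.trans (Finset.sum_congr rfl fun y _ => ?_) h1
    refine Finset.sum_congr rfl fun x _ => ?_
    rw [hammingDist_comm]
  have hhalf : (∑ x : Fin N → Bool, ∑ y,
      if hammingDist x y = 1 then -((v x * v x + v y * v y)/2) else 0) = -(N * Q) := by
    have hsplit : ∀ x y : Fin N → Bool,
        (if hammingDist x y = 1 then -((v x * v x + v y * v y)/2) else 0)
          = (-(1/2 : ℝ)) * (if hammingDist x y = 1 then v x * v x else 0)
            + (-(1/2 : ℝ)) * (if hammingDist x y = 1 then v y * v y else 0) := by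
      intro x y
      rcases eq_or_ne (hammingDist x y) 1 with h | h <;> simp [h] <;> ring
    simp_rw [hsplit, Finset.sum_add_distrib, ← Finset.mul_sum]
    rw [h1, h2]
    ring
  have hT : -(N * Q) ≤ ∑ x : Fin N → Bool, ∑ y,
      if hammingDist x y = 1 then -(v x * v y) else 0 := by
    rw [← hhalf]
    refine Finset.sum_le_sum fun x _ => Finset.sum_le_sum fun y _ => ?_
    rcases eq_or_ne (hammingDist x y) 1 with h | h <;> simp [h]
    nlinarith [sq_nonneg (v x - v y)]
  have hvv : v ⬝ᵥ v = Q := rfl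
  rw [e2, hvv]
  have hb1 : (1 - s) * (-(N * Q)) ≤ (1 - s) * ∑ x : Fin N → Bool, ∑ y,
      (if hammingDist x y = 1 then -(v x * v y) else 0) :=
    mul_le_mul_of_nonneg_left hT (by linarith)
  have hb2 : s * Q ≤ s * ∑ x, E x * (v x * v x) := mul_le_mul_of_nonneg_left hP hs0
  nlinarith [hb1, hb2]

private lemma eig_diag {n : Type*} [Fintype n] [DecidableEq n]
    {A : Matrix n n ℝ} (hA : A.IsHermitian) (x : n) :
    A x x = ∑ j, hA.eigenvalues j * (hA.eigenvectorBasis j x * hA.eigenvectorBasis j x) := by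
  conv_lhs => rw [hA.spectral_theorem]
  rw [Unitary.conjStarAlgAut_apply]
  simp only [Matrix.mul_apply, Matrix.diagonal_apply, Matrix.star_apply, Function.comp_apply,
    Matrix.IsHermitian.eigenvectorUnitary_apply, RCLike.star_def, RCLike.ofReal_real_eq_id,
    id_eq, conj_trivial, mul_ite, ite_mul, zero_mul, mul_zero, Finset.sum_ite_eq',
    Finset.mem_univ, if_true]
  refine Finset.sum_congr rfl fun j _ => ?_
  ring_nf

private lemma eig_unit {n : Type*} [Fintype n] [DecidableEq n]
    {A : Matrix n n ℝ} (hA : A.IsHermitian) (x : n) :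
    ∑ j, (hA.eigenvectorBasis j x * hA.eigenvectorBasis j x) = 1 := by
  have hU : (hA.eigenvectorUnitary : Matrix n n ℝ) * star (hA.eigenvectorUnitary : Matrix n n ℝ)
      = 1 := Matrix.mem_unitaryGroup_iff.mp hA.eigenvectorUnitary.2
  have h1 : ((hA.eigenvectorUnitary : Matrix n n ℝ) *
      star (hA.eigenvectorUnitary : Matrix n n ℝ)) x x = (1 : Matrix n n ℝ) x x := by rw [hU]
  simp only [Matrix.mul_apply, Matrix.star_apply, Matrix.IsHermitian.eigenvectorUnitary_apply,
    RCLike.star_def, conj_trivial, Matrix.one_apply_eq] at h1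
  exact h1

/-- Let `N ≥ 1` and let `H(s) = (1−s)H_0 + s·H_P` with `E_{x⁰} = 0` and
`E_x ≥ 1` for `x ≠ x⁰`. Then for every `s` with `2N/(2N+2) < s ≤ 1`, the gap `Δ(s)` between
the second-smallest and smallest eigenvalues of `H(s)` (counted with multiplicity, i.e. the
difference between the minimum of the remaining eigenvalues and the minimal one) satisfies
`Δ(s) ≥ s − 2(1−s)N`. -/
theorem stmt_18 (N : ℕ) (hN : 1 ≤ N) (E : (Fin N → Bool) → ℝ)
    (x₀ : Fin N → Bool) (hx₀ : E x₀ = 0) (hE : ∀ x, x ≠ x₀ → 1 ≤ E x)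
    (s : ℝ) (hs₁ : 2 * N / (2 * N + 2) < s) (hs₂ : s ≤ 1)
    (hH : (adiabaticH N E s).IsHermitian)
    (i₀ : Fin N → Bool) (hmin : ∀ j, hH.eigenvalues i₀ ≤ hH.eigenvalues j)
    (hne : (Finset.univ.erase i₀).Nonempty) :
    s - 2 * (1 - s) * N ≤
      (Finset.univ.erase i₀).inf' hne hH.eigenvalues - hH.eigenvalues i₀ := by
  have hs0 : (0:ℝ) < s := lt_of_le_of_lt (by positivity) hs₁
  have hN0 : (0:ℝ) ≤ (1 - s) * N := by
    have : (0:ℝ) ≤ 1 - s := by linarith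
    positivity
  -- Fact B : the minimal eigenvalue is ≤ 0
  have hdiag : adiabaticH N E s x₀ x₀ = 0 := by
    simp [adiabaticH, hx₀]
  have hB : hH.eigenvalues i₀ ≤ 0 := by
    have h1 := eig_diag hH x₀
    have h2 := eig_unit hH x₀
    rw [hdiag] at h1
    calc hH.eigenvalues i₀ = hH.eigenvalues i₀ * 1 := (mul_one _).symm
      _ = ∑ j, hH.eigenvalues i₀ * (hH.eigenvectorBasis j x₀ * hH.eigenvectorBasis j x₀) := by
          rw [← h2, Finset.mul_sum]
      _ ≤ ∑ j, hH.eigenvalues j * (hH.eigenvectorBasis j x₀ * hH.eigenvectorBasis j x₀) :=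
          Finset.sum_le_sum fun j _ =>
            mul_le_mul_of_nonneg_right (hmin j) (mul_self_nonneg _)
      _ = 0 := h1.symm
  -- the minimizer over the erased set
  obtain ⟨j, hjmem, hjeq⟩ := Finset.exists_mem_eq_inf' hne hH.eigenvalues
  have hji : j ≠ i₀ := Finset.ne_of_mem_erase hjmem
  -- Fact C : every eigenvalue other than the minimal one is ≥ s - (1-s)N
  have hC : s - (1 - s) * N ≤ hH.eigenvalues j := by
    set u₁ : (Fin N → Bool) → ℝ := ⇑(hH.eigenvectorBasis i₀) with hu₁
    set u₂ : (Fin N → Bool) → ℝ := ⇑(hH.eigenvectorBasis j) with hu₂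
    have hd11 : u₁ ⬝ᵥ u₁ = 1 := by rw [hu₁]; simpa using eigen_dot hH i₀ i₀
    have hd22 : u₂ ⬝ᵥ u₂ = 1 := by rw [hu₂]; simpa using eigen_dot hH j j
    have hd12 : u₁ ⬝ᵥ u₂ = 0 := by
      rw [hu₁, hu₂]; simpa [Ne.symm hji] using eigen_dot hH i₀ j
    have hd21 : u₂ ⬝ᵥ u₁ = 0 := by
      rw [hu₁, hu₂]; simpa [hji] using eigen_dot hH j i₀
    have hmv₁ : adiabaticH N E s *ᵥ u₁ = hH.eigenvalues i₀ • u₁ := hH.mulVec_eigenvectorBasis i₀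
    have hmv₂ : adiabaticH N E s *ᵥ u₂ = hH.eigenvalues j • u₂ := hH.mulVec_eigenvectorBasis j
    set a : ℝ := u₁ x₀ with ha
    set b : ℝ := u₂ x₀ with hb
    rcases eq_or_ne (a * a + b * b) 0 with hab | hab
    · have ha0 : a = 0 := by nlinarith [mul_self_nonneg a, mul_self_nonneg b]
      have hb0 : b = 0 := by nlinarith [mul_self_nonneg a, mul_self_nonneg b]
      have hq := quadA E hs0.le hs₂ x₀ hx₀ hE u₂ (by rw [← hb]; exact hb0)
      rw [hd22, hmv₂, dotProduct_smul, smul_eq_mul, hd22, mul_one, mul_one] at hq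
      exact hq
    · set v : (Fin N → Bool) → ℝ := b • u₁ - a • u₂ with hvdef
      have hvx : v x₀ = 0 := by
        simp only [hvdef, Pi.sub_apply, Pi.smul_apply, smul_eq_mul, ← ha, ← hb]
        ring
      have hApp : adiabaticH N E s *ᵥ v
          = b • (hH.eigenvalues i₀ • u₁) - a • (hH.eigenvalues j • u₂) := by
        rw [hvdef, Matrix.mulVec_sub, Matrix.mulVec_smul, Matrix.mulVec_smul, hmv₁, hmv₂]
      have hq : v ⬝ᵥ (adiabaticH N E s *ᵥ v)
          = b * b * hH.eigenvalues i₀ + a * a * hH.eigenvalues j := by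
        rw [hApp, hvdef]
        simp only [sub_dotProduct, dotProduct_sub, smul_dotProduct,
          dotProduct_smul, smul_eq_mul, hd11, hd22, hd12, hd21]
        ring
      have hnn : v ⬝ᵥ v = b * b + a * a := by
        rw [hvdef]
        simp only [sub_dotProduct, dotProduct_sub, smul_dotProduct,
          dotProduct_smul, smul_eq_mul, hd11, hd22, hd12, hd21]
        ring
      have h5 := quadA E hs0.le hs₂ x₀ hx₀ hE v hvx
      rw [hq, hnn] at h5
      have hle : b * b * hH.eigenvalues i₀ + a * a * hH.eigenvalues j
          ≤ (b * b + a * a) * hH.eigenvalues j := by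
        nlinarith [hmin j, mul_self_nonneg b]
      have hpos : 0 < b * b + a * a :=
        lt_of_le_of_ne (add_nonneg (mul_self_nonneg b) (mul_self_nonneg a))
          (fun h => hab (by linarith))
      have h6 : (s - (1 - s) * N) * (b * b + a * a)
          ≤ (b * b + a * a) * hH.eigenvalues j := le_trans h5 hle
      rw [mul_comm] at h6
      exact (mul_le_mul_iff_right₀ hpos).mp h6
  rw [hjeq]
  linarith
end

section
/- For every real constant C > 0 there exist a constant c > 0 and an integer N₀ such that the following holds for all N ≥ N₀. Let H(s) = (1−s)H_0 + s·H_P on ℝ^({0,1}^N), where H_0 has entries (H_0)_{x,y} = −1 if x and y differ in exactly one bit and 0 otherwise, and H_P is diagonal with diagonal entries E_x satisfying E_{x⁰} = 0 for one distinguished string x⁰ and 1 ≤ E_x ≤ C·N for all x ≠ x⁰. Then the gap Δ(s) between the second-smallest and smallest eigenvalues of H(s) satisfies Δ(s) ≥ N^(−c·N) for all 0 ≤ s ≤ 1 (i.e., Δ(s) ≥ 2^(−O(N log N)) uniformly in s). -/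
open scoped Classical

section VDVHelpers

open Matrix Finset Function
open scoped RealInnerProductSpace

set_option linter.unusedSectionVars false
set_option linter.unusedVariables false

variable {n : Type*} [Fintype n] [DecidableEq n]



lemma vdv_inner_eq (x y : EuclideanSpace ℝ n) : ⟪x, y⟫ = (x : n → ℝ) ⬝ᵥ (y : n → ℝ) := by
  simp [PiLp.inner_apply, dotProduct, mul_comm]

lemma vdv_quadform (A : Matrix n n ℝ) (hA : Aᵀ = A)
    (b : OrthonormalBasis n ℝ (EuclideanSpace ℝ n)) (ν : n → ℝ)
    (hb : ∀ k, A *ᵥ (b k : n → ℝ) = ν k • (b k : n → ℝ)) (z : n → ℝ) :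
    z ⬝ᵥ (A *ᵥ z) = ∑ k, ν k * ((b k : n → ℝ) ⬝ᵥ z) ^ 2 := by
  have h1 := b.sum_inner_mul_inner (x := WithLp.toLp 2 z) (y := WithLp.toLp 2 (A *ᵥ z))
  simp only [vdv_inner_eq, WithLp.ofLp_toLp] at h1
  rw [← h1]
  apply Finset.sum_congr rfl
  intro k _
  have h2 : (b k : n → ℝ) ⬝ᵥ (A *ᵥ z) = ν k * ((b k : n → ℝ) ⬝ᵥ z) := by
    rw [dotProduct_mulVec, ← mulVec_transpose, hA, hb k]
    simp [dotProduct, Finset.mul_sum]; exact Finset.sum_congr rfl fun i _ => by simp [mul_assoc]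
  rw [h2, dotProduct_comm z]
  ring

lemma vdv_parseval (b : OrthonormalBasis n ℝ (EuclideanSpace ℝ n)) (z : n → ℝ) :
    ∑ k, ((b k : n → ℝ) ⬝ᵥ z) ^ 2 = z ⬝ᵥ z := by
  have h1 := b.sum_inner_mul_inner (x := WithLp.toLp 2 z) (y := WithLp.toLp 2 z)
  simp only [vdv_inner_eq, WithLp.ofLp_toLp] at h1
  rw [← h1]
  apply Finset.sum_congr rfl
  intro k _
  rw [dotProduct_comm z]
  ring



lemma vdv_schur (A : Matrix n n ℝ) (hA : Aᵀ = A) (R : ℝ)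
    (hR : ∀ x, ∑ y, |A x y| ≤ R)
    (z : n → ℝ) : |z ⬝ᵥ (A *ᵥ z)| ≤ R * (z ⬝ᵥ z) := by
  have hsym : ∀ x y, |A y x| = |A x y| := by
    intro x y; rw [show A y x = Aᵀ x y from rfl, hA]
  have key : |z ⬝ᵥ (A *ᵥ z)| ≤ ∑ x, ∑ y, |A x y| * ((z x ^ 2 + z y ^ 2) / 2) := by
    calc |z ⬝ᵥ (A *ᵥ z)| = |∑ x, ∑ y, z x * (A x y * z y)| := by
          simp [dotProduct, mulVec, dotProduct, Finset.mul_sum]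
      _ ≤ ∑ x, ∑ y, |z x * (A x y * z y)| := by
          refine (Finset.abs_sum_le_sum_abs _ _).trans ?_
          exact Finset.sum_le_sum fun x _ => Finset.abs_sum_le_sum_abs _ _
      _ ≤ ∑ x, ∑ y, |A x y| * ((z x ^ 2 + z y ^ 2) / 2) := by
          refine Finset.sum_le_sum fun x _ => Finset.sum_le_sum fun y _ => ?_
          rw [abs_mul, abs_mul, mul_comm |z x|, mul_assoc]
          refine mul_le_mul_of_nonneg_left ?_ (abs_nonneg _)
          rw [mul_comm]
          nlinarith [sq_nonneg (|z x| - |z y|), sq_abs (z x), sq_abs (z y),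
            abs_nonneg (z x), abs_nonneg (z y)]
  refine key.trans ?_
  have e1 : ∑ x, ∑ y, |A x y| * ((z x ^ 2 + z y ^ 2) / 2)
      = (∑ x, (∑ y, |A x y|) * (z x ^ 2 / 2)) + (∑ y, (∑ x, |A x y|) * (z y ^ 2 / 2)) := by
    have step : ∀ x, ∑ y, |A x y| * ((z x ^ 2 + z y ^ 2) / 2)
        = (∑ y, |A x y| * (z x ^ 2 / 2)) + ∑ y, |A x y| * (z y ^ 2 / 2) := by
      intro x
      rw [← Finset.sum_add_distrib]
      exact Finset.sum_congr rfl fun y _ => by ring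
    simp_rw [step]
    rw [Finset.sum_add_distrib]
    congr 1
    · exact Finset.sum_congr rfl fun x _ => (Finset.sum_mul _ _ _).symm
    · rw [Finset.sum_comm]
      exact Finset.sum_congr rfl fun y _ => (Finset.sum_mul _ _ _).symm
  rw [e1]
  have hb1 : (∑ x, (∑ y, |A x y|) * (z x ^ 2 / 2)) ≤ ∑ x, R * (z x ^ 2 / 2) :=
    Finset.sum_le_sum fun x _ => mul_le_mul_of_nonneg_right (hR x) (by positivity)
  have hb2 : (∑ y, (∑ x, |A x y|) * (z y ^ 2 / 2)) ≤ ∑ y, R * (z y ^ 2 / 2) := by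
    refine Finset.sum_le_sum fun y _ => mul_le_mul_of_nonneg_right ?_ (by positivity)
    calc ∑ x, |A x y| = ∑ x, |A y x| := by simp_rw [hsym]
      _ ≤ R := hR y
  calc (∑ x, (∑ y, |A x y|) * (z x ^ 2 / 2)) + (∑ y, (∑ x, |A x y|) * (z y ^ 2 / 2))
      ≤ (∑ x, R * (z x ^ 2 / 2)) + (∑ y, R * (z y ^ 2 / 2)) := add_le_add hb1 hb2
    _ = R * (z ⬝ᵥ z) := by
        simp only [dotProduct, ← Finset.mul_sum, ← Finset.sum_div]
        rw [show (∑ i, z i * z i) = ∑ i, z i ^ 2 from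
          Finset.sum_congr rfl fun i _ => (pow_two (z i)).symm]
        ring



lemma vdv_pow_mulVec (M : Matrix n n ℝ) (w : n → ℝ) (t : ℝ) (h : M *ᵥ w = t • w) :
    ∀ m : ℕ, (M ^ m) *ᵥ w = t ^ m • w := by
  intro m
  induction m with
  | zero => simp
  | succ k ih =>
    rw [pow_succ', pow_succ', ← mulVec_mulVec, ih, mulVec_smul, h, smul_smul, mul_comm]

lemma vdv_pow_nonneg (M : Matrix n n ℝ) (h : ∀ x y, 0 ≤ M x y) (m : ℕ) :
    ∀ x y, 0 ≤ (M ^ m) x y := by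
  induction m with
  | zero => intro x y; by_cases hxy : x = y <;> simp [pow_zero, Matrix.one_apply, hxy]
  | succ k ih =>
    intro x y
    rw [pow_succ', Matrix.mul_apply]
    exact Finset.sum_nonneg fun z _ => mul_nonneg (h x z) (ih z y)

lemma vdv_pow_step (M : Matrix n n ℝ) (h : ∀ x y, 0 ≤ M x y) (k : ℕ) (x z y : n) :
    M x z * ((M ^ k) z y) ≤ (M ^ (k + 1)) x y := by
  rw [pow_succ', Matrix.mul_apply]
  exact Finset.single_le_sum (f := fun w => M x w * (M ^ k) w y)
    (fun w _ => mul_nonneg (h x w) (vdv_pow_nonneg M h k w y)) (Finset.mem_univ z)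

lemma vdv_pow_sub_pow (b t : ℝ) (ht : 0 ≤ t) (htb : t ≤ b) (N : ℕ) :
    b ^ N - t ^ N ≤ N * b ^ (N - 1) * (b - t) := by
  induction N with
  | zero => simp
  | succ k ih =>
    have hb : 0 ≤ b := ht.trans htb
    rcases Nat.eq_zero_or_pos k with hk | hk
    · subst hk; simp
    have h1 : b ^ (k + 1) - t ^ (k + 1) = b * (b ^ k - t ^ k) + t ^ k * (b - t) := by ring
    have h2 : t ^ k ≤ b ^ k := pow_le_pow_left₀ ht htb k
    have h3 : b * (b ^ k - t ^ k) ≤ b * (k * b ^ (k - 1) * (b - t)) :=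
      mul_le_mul_of_nonneg_left ih hb
    have h4 : b * (k * b ^ (k - 1) * (b - t)) = k * (b * b ^ (k-1)) * (b - t) := by ring
    have h5 : b * b ^ (k - 1) = b ^ k := by
      rw [← pow_succ']
      congr 1
      omega
    have h6 : t ^ k * (b - t) ≤ b ^ k * (b - t) :=
      mul_le_mul_of_nonneg_right h2 (by linarith)
    have : (k + 1 : ℕ) * b ^ (k + 1 - 1) * (b - t) = k * b ^ k * (b - t) + b ^ k * (b - t) := by
      rw [Nat.add_sub_cancel]
      push_cast
      ring
    rw [this, h1]
    rw [h4, h5] at h3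
    linarith

lemma vdv_ham_unfold {N : ℕ} (x y : Fin N → Bool) :
    hammingDist x y = (Finset.univ.filter fun i => x i ≠ y i).card := rfl

lemma vdv_ham_step {N : ℕ} (x y : Fin N → Bool) (h : x ≠ y) :
    ∃ z : Fin N → Bool, hammingDist x z = 1 ∧ hammingDist z y + 1 = hammingDist x y := by
  have hne : (Finset.univ.filter fun i => x i ≠ y i).Nonempty := by
    rw [Finset.filter_nonempty_iff]
    by_contra hc
    push_neg at hc
    exact h (funext fun i => hc i (Finset.mem_univ i))
  obtain ⟨i, hi0⟩ := hne
  have hi := Finset.mem_filter.mp hi0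
  refine ⟨Function.update x i (y i), ?_, ?_⟩
  · rw [vdv_ham_unfold]
    rw [show (Finset.univ.filter fun j => x j ≠ Function.update x i (y i) j) = {i} from ?_]
    · simp
    ext j
    simp only [Finset.mem_filter, Finset.mem_univ, true_and, Finset.mem_singleton]
    constructor
    · intro hj
      by_contra hji
      rw [Function.update_of_ne hji] at hj
      exact hj rfl
    · intro hj; subst hj
      rw [Function.update_self]
      exact hi.2
  · rw [vdv_ham_unfold, vdv_ham_unfold]
    have : (Finset.univ.filter fun j => Function.update x i (y i) j ≠ y j)
        = (Finset.univ.filter fun j => x j ≠ y j).erase i := by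
      ext j
      simp only [Finset.mem_filter, Finset.mem_univ, true_and, Finset.mem_erase]
      by_cases hji : j = i
      · subst hji; simp [Function.update_self]
      · rw [Function.update_of_ne hji]
        tauto
    rw [this, Finset.card_erase_of_mem hi0]
    have : 0 < (Finset.univ.filter fun j => x j ≠ y j).card := Finset.card_pos.mpr ⟨i, hi0⟩
    omega

lemma vdv_neighbors_card {N : ℕ} (x : Fin N → Bool) :
    (Finset.univ.filter fun y => hammingDist x y = 1).card ≤ N := by
  classical
  have hsub : (Finset.univ.filter fun y => hammingDist x y = 1)
      ⊆ Finset.univ.image (fun i : Fin N => Function.update x i (!x i)) := by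
    intro y hy
    rw [Finset.mem_filter] at hy
    obtain ⟨i, hfi⟩ := Finset.card_eq_one.mp (hy.2 : _)
    have hmem : ∀ j, x j ≠ y j ↔ j = i := by
      intro j
      constructor
      · intro hj
        have : j ∈ (Finset.univ.filter fun k => x k ≠ y k) := Finset.mem_filter.mpr ⟨Finset.mem_univ j, hj⟩
        rw [hfi, Finset.mem_singleton] at this
        exact this
      · intro hj
        subst hj
        have : j ∈ ({j} : Finset (Fin N)) := Finset.mem_singleton_self j
        rw [← hfi, Finset.mem_filter] at this
        exact this.2
    refine Finset.mem_image.mpr ⟨i, Finset.mem_univ i, ?_⟩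
    funext j
    by_cases hji : j = i
    · subst hji
      rw [Function.update_self]
      have := (hmem j).mpr rfl
      revert this
      cases x j <;> cases y j <;> simp
    · rw [Function.update_of_ne hji]
      by_contra hxyj
      exact hji ((hmem j).mp hxyj)
  calc _ ≤ (Finset.univ.image (fun i : Fin N => Function.update x i (!x i))).card :=
        Finset.card_le_card hsub
    _ ≤ (Finset.univ : Finset (Fin N)).card := Finset.card_image_le
    _ = N := by simp


lemma vdv_path {N : ℕ} (M : Matrix (Fin N → Bool) (Fin N → Bool) ℝ) (e : ℝ)
    (he0 : 0 ≤ e) (he1 : e ≤ 1)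
    (hnn : ∀ x y, 0 ≤ M x y) (hdiag : ∀ x, 1 ≤ M x x)
    (hedge : ∀ x y, hammingDist x y = 1 → M x y = e)
    (hpnn : ∀ m x y, 0 ≤ (M ^ m) x y)
    (hstep : ∀ k x z y, M x z * ((M ^ k) z y) ≤ (M ^ (k + 1)) x y) :
    ∀ k x y, hammingDist x y ≤ k → e ^ k ≤ (M ^ k) x y := by
  intro k
  induction k with
  | zero =>
    intro x y h
    have : x = y := hammingDist_eq_zero.mp (Nat.le_zero.mp h)
    subst this
    simp [Matrix.one_apply]
  | succ k ih =>
    intro x y h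
    by_cases hd : hammingDist x y ≤ k
    · have h1 : e ^ k ≤ (M ^ k) x y := ih x y hd
      calc e ^ (k + 1) = e * e ^ k := by ring
        _ ≤ 1 * e ^ k := mul_le_mul_of_nonneg_right he1 (pow_nonneg he0 k)
        _ = e ^ k := one_mul _
        _ ≤ M x x * ((M ^ k) x y) := by
            calc e ^ k ≤ (M ^ k) x y := h1
              _ = 1 * ((M ^ k) x y) := (one_mul _).symm
              _ ≤ M x x * ((M ^ k) x y) := mul_le_mul_of_nonneg_right (hdiag x) (hpnn k x y)
        _ ≤ (M ^ (k + 1)) x y := hstep k x x y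
    · have hxy : x ≠ y := by
        intro hh; subst hh; simp [hammingDist_self] at hd
      obtain ⟨z, hz1, hz2⟩ := vdv_ham_step x y hxy
      have hdz : hammingDist z y ≤ k := by omega
      calc e ^ (k + 1) = e * e ^ k := by ring
        _ ≤ M x z * ((M ^ k) z y) := by
            rw [hedge x z hz1]
            exact mul_le_mul_of_nonneg_left (ih z y hdz) he0
        _ ≤ (M ^ (k + 1)) x y := hstep k x z y
lemma vdv_quad_le (A : Matrix n n ℝ) (hA : Aᵀ = A)
    (b : OrthonormalBasis n ℝ (EuclideanSpace ℝ n)) (ν : n → ℝ)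
    (hb : ∀ k, A *ᵥ (b k : n → ℝ) = ν k • (b k : n → ℝ)) (c : ℝ)
    (hc : ∀ k, ν k ≤ c) (z : n → ℝ) : z ⬝ᵥ (A *ᵥ z) ≤ c * (z ⬝ᵥ z) := by
  rw [vdv_quadform A hA b ν hb z, ← vdv_parseval b z, Finset.mul_sum]
  exact Finset.sum_le_sum fun k _ => mul_le_mul_of_nonneg_right (hc k) (sq_nonneg _)

lemma vdv_quad_ge (A : Matrix n n ℝ) (hA : Aᵀ = A)
    (b : OrthonormalBasis n ℝ (EuclideanSpace ℝ n)) (ν : n → ℝ)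
    (hb : ∀ k, A *ᵥ (b k : n → ℝ) = ν k • (b k : n → ℝ)) (c : ℝ)
    (hc : ∀ k, c ≤ ν k) (z : n → ℝ) : c * (z ⬝ᵥ z) ≤ z ⬝ᵥ (A *ᵥ z) := by
  rw [vdv_quadform A hA b ν hb z, ← vdv_parseval b z, Finset.mul_sum]
  exact Finset.sum_le_sum fun k _ => mul_le_mul_of_nonneg_right (hc k) (sq_nonneg _)

lemma vdv_dot_basis (b : OrthonormalBasis n ℝ (EuclideanSpace ℝ n)) (i j : n) :
    (b i : n → ℝ) ⬝ᵥ (b j : n → ℝ) = if i = j then 1 else 0 := by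
  rw [← vdv_inner_eq]
  rcases eq_or_ne i j with h | h
  · subst h
    rw [if_pos rfl, real_inner_self_eq_norm_sq, b.orthonormal.1 i]
    norm_num
  · rw [if_neg h]
    exact b.orthonormal.2 h

end VDVHelpers
set_option maxHeartbeats 2000000 in
open Matrix Finset in
/-- van Dam–Vazirani lower bound: For every `C > 0` there exist `c > 0` and
`N₀` such that for all `N ≥ N₀` and all diagonal costs `E` with `E_{x⁰} = 0` and
`1 ≤ E_x ≤ C·N` for `x ≠ x⁰`, the gap `Δ(s)` between the second-smallest and smallest
eigenvalues of `H(s) = (1−s)H_0 + s·H_P` satisfies `Δ(s) ≥ N^(−c·N)` for all `0 ≤ s ≤ 1`. -/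
theorem stmt_19 (C : ℝ) (hC : 0 < C) :
    ∃ (c : ℝ) (N₀ : ℕ), 0 < c ∧
      ∀ N : ℕ, N₀ ≤ N →
        ∀ E : (Fin N → Bool) → ℝ, ∀ x₀ : Fin N → Bool,
          E x₀ = 0 → (∀ x, x ≠ x₀ → 1 ≤ E x ∧ E x ≤ C * N) →
          ∀ s : ℝ, 0 ≤ s → s ≤ 1 →
            ∀ (hH : (adiabaticH N E s).IsHermitian)
              (i₀ : Fin N → Bool),
              (∀ j, hH.eigenvalues i₀ ≤ hH.eigenvalues j) →
              ∀ hne : (Finset.univ.erase i₀).Nonempty,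
                (N : ℝ) ^ (-(c * N) : ℝ) ≤
                  (Finset.univ.erase i₀).inf' hne hH.eigenvalues - hH.eigenvalues i₀ := by
  classical
  refine ⟨5, ⌈2*C⌉₊ + 16, by norm_num, ?_⟩
  intro N hN E x₀ hEx₀ hEoth s hs0 hs1 hH i₀ hmin hne
  have hN16 : (16:ℝ) ≤ (N:ℝ) := by
    have : (16:ℕ) ≤ N := le_trans (by omega) hN
    exact_mod_cast this
  have hCN : 2*C + 16 ≤ (N:ℝ) := by
    have h1 : (⌈2*C⌉₊ : ℝ) + 16 ≤ (N:ℝ) := by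
      have : ((⌈2*C⌉₊ + 16 : ℕ) : ℝ) ≤ (N:ℝ) := by exact_mod_cast hN
      push_cast at this; linarith
    have h2 : 2*C ≤ (⌈2*C⌉₊:ℝ) := Nat.le_ceil _
    linarith
  have hNpos : (0:ℝ) < N := by linarith
  have hN1R : (1:ℝ) ≤ N := by linarith
  set H := adiabaticH N E s with hHdef
  have hEnn : ∀ x, 0 ≤ E x := by
    intro x
    rcases eq_or_ne x x₀ with h | h
    · rw [h, hEx₀]
    · linarith [(hEoth x h).1]
  have hEle : ∀ x, E x ≤ C * N := by
    intro x
    rcases eq_or_ne x x₀ with h | h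
    · rw [h, hEx₀]; positivity
    · exact (hEoth x h).2
  have hHapp : ∀ x y, H x y =
      (1 - s) * (if hammingDist x y = 1 then (-1 : ℝ) else 0) +
        s * (if x = y then E x else 0) := fun x y => rfl
  have hHsym : Hᵀ = H := by
    ext x y
    rw [Matrix.transpose_apply, hHapp, hHapp, hammingDist_comm]
    rcases eq_or_ne x y with h | h
    · subst h; rfl
    · rw [if_neg h, if_neg (Ne.symm h)]
  -- row sums
  have hrow : ∀ x, ∑ y, |H x y| ≤ (C+1) * N := by
    intro x
    have hterm : ∀ y, |H x y| ≤ (if y = x then s * E x else 0) +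
        (if hammingDist x y = 1 then (1-s) else 0) := by
      intro y
      rcases eq_or_ne y x with h | h
      · subst h
        rw [hHapp]
        simp only [hammingDist_self, eq_self_iff_true, if_true, if_pos rfl, Nat.zero_ne_one, if_false, mul_zero,
          zero_add, add_zero]
        rw [abs_of_nonneg (mul_nonneg hs0 (hEnn y))]
      · rw [hHapp, if_neg (Ne.symm h), if_neg h, mul_zero, add_zero, abs_mul]
        rcases eq_or_ne (hammingDist x y) 1 with hd | hd
        · rw [if_pos hd, if_pos hd, abs_of_nonneg (by linarith)]
          simp
        · rw [if_neg hd, if_neg hd]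
          simp
    calc ∑ y, |H x y| ≤ ∑ y, ((if y = x then s * E x else 0) +
          (if hammingDist x y = 1 then (1-s) else 0)) := Finset.sum_le_sum fun y _ => hterm y
      _ = s * E x + (1-s) * ((Finset.univ.filter fun y => hammingDist x y = 1).card : ℝ) := by
          rw [Finset.sum_add_distrib, Finset.sum_ite_eq' Finset.univ x (fun _ => s * E x)]
          simp only [Finset.mem_univ, if_pos]
          congr 1
          rw [Finset.sum_ite, Finset.sum_const, Finset.sum_const_zero, add_zero,
            nsmul_eq_mul, mul_comm]
      _ ≤ C * N + 1 * N := by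
          have h1 : s * E x ≤ C * N := by
            have := hEle x
            nlinarith [hEnn x]
          have h2 : ((Finset.univ.filter fun y => hammingDist x y = 1).card : ℝ) ≤ N := by
            exact_mod_cast vdv_neighbors_card x
          have h3 : (1-s) * ((Finset.univ.filter fun y => hammingDist x y = 1).card : ℝ)
              ≤ 1 * N := by
            apply mul_le_mul (by linarith) h2 (by positivity) (by norm_num)
          linarith
      _ = (C+1) * N := by ring
  set b := hH.eigenvectorBasis with hbdef
  set μ := hH.eigenvalues with hμdef
  have hbvec : ∀ k, H *ᵥ (b k : _ → ℝ) = μ k • (b k : _ → ℝ) := fun k =>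
    hH.mulVec_eigenvectorBasis k
  have hdot : ∀ i j, (b i : _ → ℝ) ⬝ᵥ (b j : _ → ℝ) = if i = j then 1 else 0 :=
    vdv_dot_basis b
  have hdot1 : ∀ k, (b k : _ → ℝ) ⬝ᵥ (b k : _ → ℝ) = 1 := by
    intro k; rw [hdot k k, if_pos rfl]
  have hray : ∀ k, (b k : _ → ℝ) ⬝ᵥ (H *ᵥ (b k : _ → ℝ)) = μ k := by
    intro k
    rw [hbvec k, dotProduct_smul, smul_eq_mul, hdot1 k, mul_one]
  have hμabs : ∀ k, |μ k| ≤ (C+1) * N := by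
    intro k
    have := vdv_schur H hHsym ((C+1)*N) hrow (b k : _ → ℝ)
    rw [hray k, hdot1 k, mul_one] at this
    exact this
  obtain ⟨j, hjmem, hjeq⟩ := Finset.exists_mem_eq_inf' hne μ
  have hji₀ : j ≠ i₀ := (Finset.mem_erase.mp hjmem).1
  rw [hjeq]
  have hμ0j : μ i₀ ≤ μ j := hmin j
  -- the target power
  have hPeq : (N:ℝ) ^ (-(5 * (N:ℝ)) : ℝ) = ((N:ℝ) ^ (5*N : ℕ))⁻¹ := by
    rw [← Real.rpow_natCast (N:ℝ) (5*N), ← Real.rpow_neg (le_of_lt hNpos)]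
    congr 1
    push_cast
    ring
  by_cases hreg : 1/(4*(N:ℝ)) ≤ 1 - s
  · -- main regime
    have hspos : 0 < 1 - s := lt_of_lt_of_le (by positivity) hreg
    set c₀ : ℝ := (C+1)*N + 1 with hc₀def
    have hc₀pos : 0 < c₀ := by
      have : 0 < (C+1)*(N:ℝ) := by positivity
      linarith
    have hμle : ∀ k, 1 ≤ c₀ - μ k ∧ c₀ - μ k ≤ 2*c₀ - 1 := by
      intro k
      have h := abs_le.mp (hμabs k)
      constructor
      · rw [hc₀def]; linarith [h.2]
      · rw [hc₀def]; linarith [h.1]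
    set D : Matrix (Fin N → Bool) (Fin N → Bool) ℝ := c₀ • (1 : Matrix _ _ ℝ) - H with hDdef
    have hDapp : ∀ x y, D x y = (if x = y then c₀ else 0) - H x y := by
      intro x y
      rw [hDdef, Matrix.sub_apply, Matrix.smul_apply, Matrix.one_apply, smul_eq_mul]
      rcases eq_or_ne x y with h | h
      · rw [if_pos h, if_pos h, mul_one]
      · rw [if_neg h, if_neg h, mul_zero]
    have hHdiag : ∀ x, H x x = s * E x := by
      intro x
      rw [hHapp]
      simp [hammingDist_self]
    have hDdiag : ∀ x, 1 ≤ D x x := by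
      intro x
      rw [hDapp, if_pos rfl, hHdiag, hc₀def]
      have h1 : s * E x ≤ C * N := by nlinarith [hEnn x, hEle x]
      have h2 : C * N ≤ (C+1) * N := by nlinarith
      linarith
    have hDedge : ∀ x y, hammingDist x y = 1 → D x y = 1 - s := by
      intro x y hd
      have hxy : x ≠ y := by
        intro h; subst h; rw [hammingDist_self] at hd; omega
      rw [hDapp, if_neg hxy, hHapp, if_pos hd, if_neg hxy]
      ring
    have hDnn : ∀ x y, 0 ≤ D x y := by
      intro x y
      rcases eq_or_ne x y with h | h
      · subst h; linarith [hDdiag x]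
      · rcases eq_or_ne (hammingDist x y) 1 with hd | hd
        · rw [hDedge x y hd]; linarith
        · rw [hDapp, if_neg h, hHapp, if_neg hd, if_neg h]
          simp
    have hDsym : Dᵀ = D := by
      rw [hDdef, Matrix.transpose_sub, Matrix.transpose_smul, Matrix.transpose_one, hHsym]
    have hDvec : ∀ k, D *ᵥ (b k : _ → ℝ) = (c₀ - μ k) • (b k : _ → ℝ) := by
      intro k
      rw [hDdef, Matrix.sub_mulVec, Matrix.smul_mulVec, Matrix.one_mulVec, hbvec k,
        sub_smul]
    set A : Matrix (Fin N → Bool) (Fin N → Bool) ℝ := D ^ N with hAdef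
    have hAsym : Aᵀ = A := by rw [hAdef, Matrix.transpose_pow, hDsym]
    set ν : (Fin N → Bool) → ℝ := fun k => (c₀ - μ k)^N with hνdef
    have hAvec : ∀ k, A *ᵥ (b k : _ → ℝ) = ν k • (b k : _ → ℝ) := fun k =>
      vdv_pow_mulVec D _ _ (hDvec k) N
    have hAnn : ∀ x y, 0 ≤ A x y := vdv_pow_nonneg D hDnn N
    set a : ℝ := (1-s)^N with hadef
    have hapos : 0 < a := by positivity
    have hAlow : ∀ x y, a ≤ A x y := by
      intro x y
      refine vdv_path D (1-s) (by linarith) (by linarith) hDnn hDdiag hDedge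
        (vdv_pow_nonneg D hDnn) (vdv_pow_step D hDnn) N x y ?_
      calc hammingDist x y ≤ Fintype.card (Fin N) := hammingDist_le_card_fintype
        _ = N := Fintype.card_fin N
    set α : ℝ := ν i₀ with hαdef
    have hνnn : ∀ k, 0 ≤ c₀ - μ k := fun k => by linarith [(hμle k).1]
    have hνmax : ∀ k, ν k ≤ α := by
      intro k
      rw [hαdef, hνdef]
      exact pow_le_pow_left₀ (hνnn k) (by linarith [hmin k]) N
    have hquadA : ∀ z, z ⬝ᵥ (A *ᵥ z) ≤ α * (z ⬝ᵥ z) :=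
      vdv_quad_le A hAsym b ν hAvec α hνmax
    -- B matrix
    set Bm : Matrix (Fin N → Bool) (Fin N → Bool) ℝ := A - Matrix.of (fun _ _ => a)
      with hBmdef
    have hBapp : ∀ x y, Bm x y = A x y - a := fun x y => rfl
    have hBnn : ∀ x y, 0 ≤ Bm x y := fun x y => by
      rw [hBapp]; linarith [hAlow x y]
    have hBsym : Bmᵀ = Bm := by
      ext x y
      rw [Matrix.transpose_apply, hBapp, hBapp, show A y x = Aᵀ x y from rfl, hAsym]
    have hBH : Bm.IsHermitian := by
      show Bmᴴ = Bm
      rw [Matrix.conjTranspose_eq_transpose_of_trivial]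
      exact hBsym
    obtain ⟨kB, _, hkBmax⟩ := Finset.exists_max_image Finset.univ hBH.eigenvalues
      Finset.univ_nonempty
    set lamB : ℝ := hBH.eigenvalues kB with hlamBdef
    have hBvec : ∀ k, Bm *ᵥ (hBH.eigenvectorBasis k : _ → ℝ)
        = hBH.eigenvalues k • (hBH.eigenvectorBasis k : _ → ℝ) := fun k =>
      hBH.mulVec_eigenvectorBasis k
    have hquadB : ∀ z, z ⬝ᵥ (Bm *ᵥ z) ≤ lamB * (z ⬝ᵥ z) :=
      vdv_quad_le Bm hBsym hBH.eigenvectorBasis hBH.eigenvalues hBvec lamB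
        (fun k => hkBmax k (Finset.mem_univ k))
    -- splitting the quadratic form of A
    have hJsplit : ∀ z : (Fin N → Bool) → ℝ,
        z ⬝ᵥ (A *ᵥ z) = z ⬝ᵥ (Bm *ᵥ z) + a * (∑ x, z x)^2 := by
      intro z
      have hAeq : A = Bm + Matrix.of (fun _ _ => a) := by
        rw [hBmdef, sub_add_cancel]
      have hconst : z ⬝ᵥ ((Matrix.of (fun _ _ => a) : Matrix (Fin N → Bool) _ ℝ) *ᵥ z)
          = a * (∑ x, z x)^2 := by
        have e1 : z ⬝ᵥ ((Matrix.of (fun _ _ => a) : Matrix (Fin N → Bool) _ ℝ) *ᵥ z)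
            = ∑ x, z x * ∑ y, a * z y := rfl
        rw [e1]
        rw [← Finset.mul_sum, ← Finset.sum_mul]
        ring
      rw [hAeq, Matrix.add_mulVec, dotProduct_add, hconst]
    -- lamB ≤ α - a  via Perron argument
    have hlamBle : lamB ≤ α - a := by
      set w0 : (Fin N → Bool) → ℝ := (hBH.eigenvectorBasis kB : _ → ℝ) with hw0def
      have hw0unit : w0 ⬝ᵥ w0 = 1 := by
        rw [hw0def]
        have := vdv_dot_basis hBH.eigenvectorBasis kB kB
        rw [if_pos rfl] at this
        exact this
      have hw0ray : w0 ⬝ᵥ (Bm *ᵥ w0) = lamB := by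
        rw [hw0def, hBvec kB, dotProduct_smul, smul_eq_mul, ← hw0def, hw0unit, mul_one]
      set w : (Fin N → Bool) → ℝ := fun x => |w0 x| with hwdef
      have hww : w ⬝ᵥ w = 1 := by
        rw [← hw0unit]
        exact Finset.sum_congr rfl fun x _ => abs_mul_abs_self (w0 x)
      have hwB : lamB ≤ w ⬝ᵥ (Bm *ᵥ w) := by
        rw [← hw0ray]
        have e1 : w0 ⬝ᵥ (Bm *ᵥ w0) = ∑ x, w0 x * ∑ y, Bm x y * w0 y := rfl
        have e2 : w ⬝ᵥ (Bm *ᵥ w) = ∑ x, w x * ∑ y, Bm x y * w y := rfl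
        rw [e1, e2]
        have hterm : ∀ x, w0 x * ∑ y, Bm x y * w0 y ≤ w x * ∑ y, Bm x y * w y := by
          intro x
          have h1 : ∀ y, w0 x * (Bm x y * w0 y) ≤ w x * (Bm x y * w y) := by
            intro y
            calc w0 x * (Bm x y * w0 y) ≤ |w0 x * (Bm x y * w0 y)| := le_abs_self _
              _ = |w0 x| * (Bm x y * |w0 y|) := by
                  rw [abs_mul, abs_mul, abs_of_nonneg (hBnn x y)]
              _ = w x * (Bm x y * w y) := rfl
          calc w0 x * ∑ y, Bm x y * w0 y = ∑ y, w0 x * (Bm x y * w0 y) := Finset.mul_sum _ _ _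
            _ ≤ ∑ y, w x * (Bm x y * w y) := Finset.sum_le_sum fun y _ => h1 y
            _ = w x * ∑ y, Bm x y * w y := (Finset.mul_sum _ _ _).symm
        exact Finset.sum_le_sum fun x _ => hterm x
      have hsumw : 1 ≤ (∑ x, w x)^2 := by
        have h1 : (∑ x, w x)^2 = ∑ x, (w x * ∑ y, w y) := by
          rw [← Finset.sum_mul]; ring
        rw [h1]
        have h2 : ∀ x, w x * w x ≤ w x * ∑ y, w y := by
          intro x
          have hwnn : ∀ y, 0 ≤ w y := fun y => abs_nonneg _
          refine mul_le_mul_of_nonneg_left ?_ (hwnn x)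
          exact Finset.single_le_sum (fun y _ => hwnn y) (Finset.mem_univ x)
        calc (1:ℝ) = w ⬝ᵥ w := hww.symm
          _ = ∑ x, w x * w x := rfl
          _ ≤ ∑ x, (w x * ∑ y, w y) := Finset.sum_le_sum fun x _ => h2 x
      have hchain : lamB + a ≤ α := by
        have h1 := hquadA w
        rw [hww, mul_one] at h1
        have h2 := hJsplit w
        have h3 : a * 1 ≤ a * (∑ x, w x)^2 := by
          exact mul_le_mul_of_nonneg_left hsumw (le_of_lt hapos)
        linarith [hwB]
      linarith
    -- second eigenvalue bound: β ≤ lamB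
    set β : ℝ := ν j with hβdef
    have hβlamB : β ≤ lamB := by
      set u : (Fin N → Bool) → ℝ := (b i₀ : _ → ℝ) with hudef
      set v : (Fin N → Bool) → ℝ := (b j : _ → ℝ) with hvdef
      have huu : u ⬝ᵥ u = 1 := hdot1 i₀
      have hvv : v ⬝ᵥ v = 1 := hdot1 j
      have huv : u ⬝ᵥ v = 0 := by
        rw [hudef, hvdef, hdot i₀ j, if_neg (Ne.symm hji₀)]
      have hvu : v ⬝ᵥ u = 0 := by
        rw [hudef, hvdef, hdot j i₀, if_neg hji₀]
      set su : ℝ := ∑ x, u x with hsudef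
      set sv : ℝ := ∑ x, v x with hsvdef
      rcases eq_or_ne (sv^2 + su^2) 0 with hzero | hnz
      · -- both sums vanish; use v directly
        have hsv : sv = 0 := by nlinarith [sq_nonneg su, sq_nonneg sv]
        have h1 := hJsplit v
        have h2 : v ⬝ᵥ (A *ᵥ v) = β := by
          rw [hAvec j, dotProduct_smul, smul_eq_mul, hvv, mul_one, hβdef]
        have h3 := hquadB v
        rw [hvv, mul_one] at h3
        rw [h2, ← hsvdef, hsv] at h1
        simp at h1
        linarith
      · set w1 : (Fin N → Bool) → ℝ := sv • u - su • v with hw1def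
        have hw1sum : ∑ x, w1 x = 0 := by
          rw [hw1def]
          simp only [Pi.sub_apply, Pi.smul_apply, smul_eq_mul]
          rw [Finset.sum_sub_distrib, ← Finset.mul_sum, ← Finset.mul_sum, ← hsudef, ← hsvdef]
          ring
        have hw1w1 : w1 ⬝ᵥ w1 = sv^2 + su^2 := by
          rw [hw1def]
          simp only [sub_dotProduct, dotProduct_sub, smul_dotProduct, dotProduct_smul,
            smul_eq_mul, huu, hvv, huv, hvu]
          ring
        have hw1A : w1 ⬝ᵥ (A *ᵥ w1) = sv^2 * α + su^2 * β := by
          have hAw1 : A *ᵥ w1 = sv • (α • u) - su • (β • v) := by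
            rw [hw1def, Matrix.mulVec_sub, Matrix.mulVec_smul, Matrix.mulVec_smul,
              hAvec i₀, hAvec j, ← hαdef, ← hβdef]
          rw [hAw1, hw1def]
          simp only [sub_dotProduct, dotProduct_sub, smul_dotProduct, dotProduct_smul,
            smul_eq_mul, huu, hvv, huv, hvu]
          ring
        have h1 := hJsplit w1
        rw [hw1sum, hw1A] at h1
        have h2 := hquadB w1
        rw [hw1w1] at h2
        have h3 : sv^2 * α + su^2 * β ≤ lamB * (sv^2 + su^2) := by
          have : (0:ℝ)^2 = 0 := by norm_num
          nlinarith [h1, h2]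
        have hβα : β ≤ α := hνmax j
        have hpos : 0 < sv^2 + su^2 := by
          rcases lt_or_eq_of_le (by positivity : (0:ℝ) ≤ sv^2 + su^2) with h | h
          · exact h
          · exact absurd h.symm hnz
        nlinarith [sq_nonneg sv, sq_nonneg su]
    -- combine: α - β ≥ a
    have hgap : a ≤ α - β := by linarith
    -- translate back to eigenvalue gap
    set bb : ℝ := c₀ - μ i₀ with hbbdef
    set tt : ℝ := c₀ - μ j with httdef
    have htt1 : 1 ≤ tt := (hμle j).1
    have httbb : tt ≤ bb := by rw [hbbdef, httdef]; linarith [hμ0j]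
    have hbb2 : bb ≤ 2*c₀ - 1 := (hμle i₀).2
    have hdiff : bb^N - tt^N ≤ N * bb^(N-1) * (bb - tt) :=
      vdv_pow_sub_pow bb tt (by linarith) httbb N
    have hαβeq : α - β = bb^N - tt^N := by rw [hαdef, hβdef, hνdef, hbbdef, httdef]
    have hΔeq : bb - tt = μ j - μ i₀ := by rw [hbbdef, httdef]; ring
    set K : ℝ := N * bb^(N-1) with hKdef
    have hKpos : 0 < K := by
      have : (0:ℝ) < bb := by linarith
      rw [hKdef]; positivity
    have haK : a ≤ K * (μ j - μ i₀) := by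
      rw [hKdef, ← hΔeq]
      calc a ≤ α - β := hgap
        _ = bb^N - tt^N := hαβeq
        _ ≤ N * bb^(N-1) * (bb - tt) := hdiff
    -- numerics
    have hbbN2 : bb ≤ (N:ℝ)^2 := by
      have h1 : 2*c₀ - 1 = 2*(C+1)*N + 1 := by rw [hc₀def]; ring
      nlinarith [hCN, hN16]
    have hK2N : K ≤ (N:ℝ)^(2*N) := by
      have h1 : bb^(N-1) ≤ ((N:ℝ)^2)^(N-1) :=
        pow_le_pow_left₀ (by linarith) hbbN2 (N-1)
      have h2 : K ≤ (N:ℝ) * ((N:ℝ)^2)^(N-1) := by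
        rw [hKdef]
        exact mul_le_mul_of_nonneg_left h1 (le_of_lt hNpos)
      have h3 : (N:ℝ) * ((N:ℝ)^2)^(N-1) = (N:ℝ)^(2*(N-1)+1) := by
        rw [← pow_mul, pow_succ']
      have h4 : (N:ℝ)^(2*(N-1)+1) ≤ (N:ℝ)^(2*N) := by
        apply pow_le_pow_right₀ hN1R
        omega
      linarith
    have ha2N : ((N:ℝ)^(2*N))⁻¹ ≤ a := by
      have h1 : ((N:ℝ)^2)⁻¹ ≤ 1/(4*(N:ℝ)) := by
        rw [inv_eq_one_div, div_le_div_iff₀ (by positivity) (by positivity)]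
        nlinarith
      have h2 : ((N:ℝ)^2)⁻¹ ≤ 1 - s := le_trans h1 hreg
      have h3 : (((N:ℝ)^2)⁻¹)^N ≤ (1-s)^N :=
        pow_le_pow_left₀ (by positivity) h2 N
      have h4 : (((N:ℝ)^2)⁻¹)^N = ((N:ℝ)^(2*N))⁻¹ := by
        rw [← inv_pow, ← pow_mul]
        exact inv_pow _ _
      rw [hadef, ← h4]
      exact h3
    -- final chain
    have hfinal : (N:ℝ) ^ (-(5 * (N:ℝ)) : ℝ) * K ≤ a := by
      rw [hPeq]
      have h1 : ((N:ℝ)^(5*N : ℕ))⁻¹ * K ≤ ((N:ℝ)^(5*N : ℕ))⁻¹ * (N:ℝ)^(2*N) := by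
        apply mul_le_mul_of_nonneg_left hK2N
        positivity
      have h2 : ((N:ℝ)^(5*N : ℕ))⁻¹ * (N:ℝ)^(2*N) = ((N:ℝ)^(3*N : ℕ))⁻¹ := by
        have e : (5*N : ℕ) = 2*N + 3*N := by omega
        rw [e, pow_add]
        have hp1 : (0:ℝ) < (N:ℝ)^(2*N) := by positivity
        have hp2 : (0:ℝ) < (N:ℝ)^(3*N) := by positivity
        field_simp
      have h3 : ((N:ℝ)^(3*N : ℕ))⁻¹ ≤ ((N:ℝ)^(2*N : ℕ))⁻¹ := by
        apply inv_anti₀ (by positivity)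
        exact pow_le_pow_right₀ hN1R (by omega)
      calc ((N:ℝ)^(5*N : ℕ))⁻¹ * K ≤ ((N:ℝ)^(3*N : ℕ))⁻¹ := by rw [← h2]; exact h1
        _ ≤ ((N:ℝ)^(2*N : ℕ))⁻¹ := h3
        _ ≤ a := ha2N
    have hgoal : (N:ℝ) ^ (-(5 * (N:ℝ)) : ℝ) ≤ μ j - μ i₀ := by
      have h1 : (N:ℝ) ^ (-(5 * (N:ℝ)) : ℝ) * K ≤ K * (μ j - μ i₀) :=
        le_trans hfinal haK
      have h2 : (N:ℝ) ^ (-(5 * (N:ℝ)) : ℝ) * K = K * ((N:ℝ) ^ (-(5 * (N:ℝ)) : ℝ)) :=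
        mul_comm _ _
      rw [h2] at h1
      exact le_of_mul_le_mul_left h1 hKpos
    exact hgoal
  · -- s close to 1
    push_neg at hreg
    have hfrac : 1/(4*(N:ℝ)) ≤ 1/4 := by
      rw [div_le_div_iff₀ (by linarith) (by norm_num)]
      linarith
    have hs34 : 3/4 < s := by linarith
    have hεN : (1-s) * N < 1/4 := by
      have h1 : (1-s) * N < (1/(4*(N:ℝ))) * N := by
        apply mul_lt_mul_of_pos_right hreg hNpos
      have h2 : (1/(4*(N:ℝ))) * N = 1/4 := by
        field_simp
      linarith
    set H0 : Matrix (Fin N → Bool) (Fin N → Bool) ℝ :=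
      Matrix.of fun x y => if hammingDist x y = 1 then (-1:ℝ) else 0 with hH0def
    have hH0app : ∀ x y, H0 x y = if hammingDist x y = 1 then (-1:ℝ) else 0 := fun x y => rfl
    have hH0sym : H0ᵀ = H0 := by
      ext x y
      rw [Matrix.transpose_apply, hH0app, hH0app, hammingDist_comm]
    have hH0row : ∀ x, ∑ y, |H0 x y| ≤ (N:ℝ) := by
      intro x
      have : ∀ y, |H0 x y| = if hammingDist x y = 1 then (1:ℝ) else 0 := by
        intro y
        rw [hH0app]
        rcases eq_or_ne (hammingDist x y) 1 with h | h
        · rw [if_pos h, if_pos h]; norm_num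
        · rw [if_neg h, if_neg h]; norm_num
      rw [Finset.sum_congr rfl fun y _ => this y]
      rw [Finset.sum_ite, Finset.sum_const, Finset.sum_const_zero, add_zero, nsmul_eq_mul,
        mul_one]
      exact_mod_cast vdv_neighbors_card x
    have hH0quad : ∀ z : (Fin N → Bool) → ℝ, |z ⬝ᵥ (H0 *ᵥ z)| ≤ N * (z ⬝ᵥ z) :=
      vdv_schur H0 hH0sym _ hH0row
    have hsplit : ∀ z : (Fin N → Bool) → ℝ, z ⬝ᵥ (H *ᵥ z)
        = (1-s) * (z ⬝ᵥ (H0 *ᵥ z)) + s * ∑ x, E x * z x ^ 2 := by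
      intro z
      have hterm : ∀ x, z x * ((H *ᵥ z) x)
          = (1-s) * (z x * ((H0 *ᵥ z) x)) + s * (E x * z x ^ 2) := by
        intro x
        have h1 : (H *ᵥ z) x = ∑ y, H x y * z y := rfl
        have h2 : (H0 *ᵥ z) x = ∑ y, H0 x y * z y := rfl
        have h3 : ∀ y, H x y * z y = (1-s) * (H0 x y * z y) +
            s * (if x = y then E x * z y else 0) := by
          intro y
          rw [hHapp, hH0app]
          rcases eq_or_ne x y with h | h
          · rw [if_pos h, if_pos h]; ring
          · rw [if_neg h, if_neg h]; ring
        rw [h1, h2, Finset.sum_congr rfl fun y _ => h3 y, Finset.sum_add_distrib,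
          ← Finset.mul_sum, ← Finset.mul_sum, Finset.sum_ite_eq, if_pos (Finset.mem_univ x)]
        ring
      have e1 : z ⬝ᵥ (H *ᵥ z) = ∑ x, z x * ((H *ᵥ z) x) := rfl
      have e2 : z ⬝ᵥ (H0 *ᵥ z) = ∑ x, z x * ((H0 *ᵥ z) x) := rfl
      rw [e1, e2, Finset.sum_congr rfl fun x _ => hterm x, Finset.sum_add_distrib,
        ← Finset.mul_sum, ← Finset.mul_sum]
    -- ground energy nonpositive
    set δ : (Fin N → Bool) → ℝ := Pi.single x₀ 1 with hδdef
    have hδapp : ∀ y, δ y = if y = x₀ then (1:ℝ) else 0 := by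
      intro y; rw [hδdef, Pi.single_apply]
    have hdotsingle : ∀ w : (Fin N → Bool) → ℝ, δ ⬝ᵥ w = w x₀ := by
      intro w
      have : ∀ y, δ y * w y = if y = x₀ then w y else 0 := by
        intro y
        rw [hδapp]
        rcases eq_or_ne y x₀ with h | h
        · rw [if_pos h, if_pos h, one_mul]
        · rw [if_neg h, if_neg h, zero_mul]
      rw [dotProduct, Finset.sum_congr rfl fun y _ => this y, Finset.sum_ite_eq',
        if_pos (Finset.mem_univ x₀)]
    have hμ0le : μ i₀ ≤ 0 := by
      have hδH : δ ⬝ᵥ (H *ᵥ δ) = 0 := by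
        rw [hdotsingle]
        have e1 : (H *ᵥ δ) x₀ = ∑ y, H x₀ y * δ y := rfl
        have e2 : ∀ y, H x₀ y * δ y = if y = x₀ then H x₀ x₀ else 0 := by
          intro y
          rw [hδapp]
          rcases eq_or_ne y x₀ with h | h
          · rw [if_pos h, if_pos h, h, mul_one]
          · rw [if_neg h, if_neg h, mul_zero]
        rw [e1, Finset.sum_congr rfl fun y _ => e2 y, Finset.sum_ite_eq',
          if_pos (Finset.mem_univ x₀), hHapp]
        simp [hammingDist_self, hEx₀]
      have hδδ : δ ⬝ᵥ δ = 1 := by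
        rw [hdotsingle, hδapp, if_pos rfl]
      have := vdv_quad_ge H hHsym b μ hbvec (μ i₀) hmin δ
      rw [hδH, hδδ, mul_one] at this
      exact this
    -- concentration of ground state
    set u : (Fin N → Bool) → ℝ := (b i₀ : (Fin N → Bool) → ℝ) with hudef
    set v : (Fin N → Bool) → ℝ := (b j : (Fin N → Bool) → ℝ) with hvdef
    have hsq : ∀ w : (Fin N → Bool) → ℝ, w ⬝ᵥ w = ∑ x, w x ^ 2 := by
      intro w
      exact Finset.sum_congr rfl fun x _ => (pow_two (w x)).symm
    have husum : ∑ x, u x ^ 2 = 1 := by rw [← hsq]; exact hdot1 i₀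
    have hvsum : ∑ x, v x ^ 2 = 1 := by rw [← hsq]; exact hdot1 j
    set Tu := ∑ x ∈ Finset.univ.erase x₀, u x ^ 2 with hTudef
    set Tv := ∑ x ∈ Finset.univ.erase x₀, v x ^ 2 with hTvdef
    have hTunn : 0 ≤ Tu := Finset.sum_nonneg fun x _ => sq_nonneg _
    have hTvnn : 0 ≤ Tv := Finset.sum_nonneg fun x _ => sq_nonneg _
    have hux₀ : u x₀ ^ 2 + Tu = 1 := by
      have h := Finset.add_sum_erase Finset.univ (fun x => u x ^ 2) (Finset.mem_univ x₀)
      rw [husum] at h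
      rw [hTudef]
      exact h
    have hvx₀ : v x₀ ^ 2 + Tv = 1 := by
      have h := Finset.add_sum_erase Finset.univ (fun x => v x ^ 2) (Finset.mem_univ x₀)
      rw [hvsum] at h
      rw [hTvdef]
      exact h
    have hEsum : ∀ w : (Fin N → Bool) → ℝ,
        (∑ x ∈ Finset.univ.erase x₀, w x ^ 2) ≤ ∑ x, E x * w x ^ 2 := by
      intro w
      have h1 := Finset.add_sum_erase Finset.univ (fun x => E x * w x ^ 2)
        (Finset.mem_univ x₀)
      rw [← h1, hEx₀, zero_mul, zero_add]
      refine Finset.sum_le_sum fun x hx => ?_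
      have hx' : x ≠ x₀ := (Finset.mem_erase.mp hx).1
      have := (hEoth x hx').1
      nlinarith [sq_nonneg (w x)]
    -- bound Tu
    have hqu : μ i₀ = (1-s) * (u ⬝ᵥ (H0 *ᵥ u)) + s * ∑ x, E x * u x ^ 2 := by
      rw [← hsplit u]; exact (hray i₀).symm
    have hq0u : -(N:ℝ) ≤ u ⬝ᵥ (H0 *ᵥ u) := by
      have h1 := hH0quad u
      rw [hdot1 i₀, mul_one] at h1
      exact neg_le_of_abs_le h1
    have hTu13 : Tu ≤ 1/3 := by
      have h1 : s * Tu ≤ s * ∑ x, E x * u x ^ 2 :=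
        mul_le_mul_of_nonneg_left (hEsum u) hs0
      have h2 : (1-s) * (u ⬝ᵥ (H0 *ᵥ u)) ≥ -((1-s) * N) := by
        have := mul_le_mul_of_nonneg_left hq0u (by linarith : (0:ℝ) ≤ 1 - s)
        linarith [this]
      nlinarith
    have hux₀23 : 2/3 ≤ u x₀ ^ 2 := by linarith
    -- orthogonality
    have huv : u ⬝ᵥ v = 0 := by
      rw [hudef, hvdef, hdot i₀ j, if_neg (Ne.symm hji₀)]
    have huv' : u x₀ * v x₀ = -∑ x ∈ Finset.univ.erase x₀, u x * v x := by
      have h1 := Finset.add_sum_erase Finset.univ (fun x => u x * v x)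
        (Finset.mem_univ x₀)
      rw [show (∑ x, u x * v x) = 0 from huv] at h1
      linarith
    have hCS : (u x₀ * v x₀) ^ 2 ≤ Tu * Tv := by
      have h2 : (u x₀ * v x₀) ^ 2 = (∑ x ∈ Finset.univ.erase x₀, u x * v x) ^ 2 := by
        rw [huv']; ring
      rw [h2, hTudef, hTvdef]
      exact Finset.sum_mul_sq_le_sq_mul_sq _ _ _
    have hvx₀13 : v x₀ ^ 2 ≤ 1/3 := by
      have h1 : (u x₀ * v x₀) ^ 2 = u x₀ ^ 2 * v x₀ ^ 2 := by ring
      nlinarith [sq_nonneg (v x₀)]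
    have hTv23 : 2/3 ≤ Tv := by linarith
    -- lower bound μ j
    have hqv : μ j = (1-s) * (v ⬝ᵥ (H0 *ᵥ v)) + s * ∑ x, E x * v x ^ 2 := by
      rw [← hsplit v]; exact (hray j).symm
    have hq0v : -(N:ℝ) ≤ v ⬝ᵥ (H0 *ᵥ v) := by
      have h1 := hH0quad v
      rw [hdot1 j, mul_one] at h1
      exact neg_le_of_abs_le h1
    have hμj : 1/4 ≤ μ j := by
      have h1 : s * Tv ≤ s * ∑ x, E x * v x ^ 2 :=
        mul_le_mul_of_nonneg_left (hEsum v) hs0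
      have h2 : -((1-s) * N) ≤ (1-s) * (v ⬝ᵥ (H0 *ᵥ v)) := by
        have := mul_le_mul_of_nonneg_left hq0v (by linarith : (0:ℝ) ≤ 1 - s)
        linarith [this]
      nlinarith
    -- conclude
    have hfinal : (N:ℝ) ^ (-(5 * (N:ℝ)) : ℝ) ≤ 1/4 := by
      rw [hPeq]
      have h1 : (16:ℝ) ≤ (N:ℝ) ^ (5*N : ℕ) := by
        calc (16:ℝ) ≤ (N:ℝ) := hN16
          _ ≤ (N:ℝ) ^ (5*N : ℕ) := le_self_pow₀ hN1R (by omega)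
      have h2 : (0:ℝ) < (N:ℝ) ^ (5*N : ℕ) := by positivity
      rw [inv_le_comm₀ h2 (by norm_num : (0:ℝ) < 1/4)] 
      linarith
    have : -(5 * (N:ℝ)) = (-(5 * (N:ℝ)) : ℝ) := rfl
    calc (N:ℝ) ^ (-(5 * (N:ℝ)) : ℝ) ≤ 1/4 := hfinal
      _ ≤ μ j - μ i₀ := by linarith
end
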